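/- arXiv:1609.07565 — 5 statements merged into one kernel-verified Lean document; each statement's English description precedes it below -/
import Mathlib

section
/- Let m be even with cbe(m) = (n_1, z_1, …, n_ω, z_ω), n_1 < n_2 < ⋯ < n_ω, and n_u < z_u for all 1 ≤ u ≤ ω. For 1 ≤ u ≤ ω set κ_u = 1^{z_1}0^{n_2}1^{z_2}⋯0^{n_{u-1}}1^{z_{u-1}}0^{n_u + z_u + ⋯ + n_ω + z_ω} (so κ_1 = 0) and ℓ_u = 1^{z_1}0^{n_2}1^{z_2}⋯0^{n_{u-1}}1^{z_{u-1}}0^{n_u}1^{z_u - n_u}0^{n_u + n_{u+1} + z_{u+1} + ⋯ + n_ω + z_ω}. Then in the r-recursion for m one has: r_{κ_1} = 2^{n_1} - 1; r_{κ_u} = 2^{n_u} - 2^{n_{u-1}} - 1 for 2 ≤ u ≤ ω; r_{ℓ_u} = 1 for 1 ≤ u ≤ ω; and r_ℓ = 0 for every other index ℓ. Consequently r(m) = 1 + 2^{n_ω}. -/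
open Finset

/-- `eVal m` = `e(m)`, the 2-adic valuation of `m + 1`. -/
def eVal (m : ℕ) : ℕ := padicValNat 2 (m + 1)

/-- `d0Val m` = `d_0 = 2 ^ k - m - 1`, where `k = Nat.size m` is the least integer
(positive, for `m ≥ 1`) with `2 ^ k > m`. -/
def d0Val (m : ℕ) : ℕ := 2 ^ Nat.size m - m - 1

/-- `dVal m ℓ` = `d_ℓ = d_0 - 2 ^ e · ℓ`. -/
def dVal (m ℓ : ℕ) : ℕ := d0Val m - 2 ^ eVal m * ℓ

/-- `tVal m` = `t = d_0 / 2 ^ e - 1`. -/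
def tVal (m : ℕ) : ℕ := d0Val m / 2 ^ eVal m - 1

/-- One step of the `r`-recursion, given the partial sum
`S = d_0·r_0 + ⋯ + d_{ℓ-1}·r_{ℓ-1}`: the value is
`⌊(m - (2^e - 1) - S) / d_ℓ⌋` if `C(m + d_ℓ, d_ℓ)` is odd, and `0` otherwise. -/
def rStep (m ℓ S : ℕ) : ℕ :=
  if (m + dVal m ℓ).choose (dVal m ℓ) % 2 = 1 then
    (m - (2 ^ eVal m - 1) - S) / dVal m ℓ
  else 0

/-- `partialS m ℓ = d_0·r_0 + ⋯ + d_{ℓ-1}·r_{ℓ-1}`. -/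
def partialS (m : ℕ) : ℕ → ℕ
  | 0 => 0
  | ℓ + 1 => partialS m ℓ + dVal m ℓ * rStep m ℓ (partialS m ℓ)

/-- `rVal m ℓ` is `r_ℓ` in the `r`-recursion. -/
def rVal (m ℓ : ℕ) : ℕ := rStep m ℓ (partialS m ℓ)

/-- `rOf m = r(m) = 1 + r_0 + r_1 + ⋯ + r_t`. -/
def rOf (m : ℕ) : ℕ := 1 + ∑ ℓ ∈ Finset.range (tVal m + 1), rVal m ℓ

/-- `tailLen ω n z u = n_u + z_u + ⋯ + n_ω + z_ω`. -/
def tailLen (ω : ℕ) (n z : ℕ → ℕ) (u : ℕ) : ℕ := ∑ v ∈ Finset.Icc u ω, (n v + z v)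

/-- `cbeNum ω n z` is the natural number with binary expansion
`1^{n_1}0^{z_1}1^{n_2}0^{z_2}⋯1^{n_ω}0^{z_ω}`, i.e. the even `m` with
`cbe(m) = (n_1, z_1, …, n_ω, z_ω)`. -/
def cbeNum (ω : ℕ) (n z : ℕ → ℕ) : ℕ :=
  ∑ u ∈ Finset.Icc 1 ω, (2 ^ n u - 1) * 2 ^ (z u + tailLen ω n z (u + 1))

/-- `κ_u = 1^{z_1}0^{n_2}1^{z_2}⋯0^{n_{u-1}}1^{z_{u-1}}0^{n_u+z_u+⋯+n_ω+z_ω}`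
(so `κ_1 = 0`). -/
def kappaIdx (ω : ℕ) (n z : ℕ → ℕ) (u : ℕ) : ℕ :=
  ∑ v ∈ Finset.Icc 1 (u - 1),
    (2 ^ z v - 1) * 2 ^ ((∑ w ∈ Finset.Icc (v + 1) (u - 1), (n w + z w)) + tailLen ω n z u)

/-- `ℓ_u = 1^{z_1}0^{n_2}1^{z_2}⋯0^{n_{u-1}}1^{z_{u-1}}0^{n_u}1^{z_u-n_u}
0^{n_u+n_{u+1}+z_{u+1}+⋯+n_ω+z_ω}`. -/
def ellIdx (ω : ℕ) (n z : ℕ → ℕ) (u : ℕ) : ℕ :=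
  kappaIdx ω n z u + (2 ^ (z u - n u) - 1) * 2 ^ (n u + tailLen ω n z (u + 1))

/-- Two naturals have disjoint binary expansions. -/
def Disj (a b : ℕ) : Prop := ∀ i, ¬(a.testBit i = true ∧ b.testBit i = true)

lemma disj_zero_left (b : ℕ) : Disj 0 b := by
  intro i h; simp [Nat.zero_testBit] at h

lemma disj_zero_right (a : ℕ) : Disj a 0 := by
  intro i h; simp [Nat.zero_testBit] at h

lemma testBit_div_pow (x T i : ℕ) : (x / 2 ^ T).testBit i = x.testBit (T + i) := by
  induction T generalizing x with
  | zero => simp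
  | succ T ih =>
    have : x / 2 ^ (T + 1) = (x / 2) / 2 ^ T := by
      rw [Nat.div_div_eq_div_mul, pow_succ, mul_comm]
    rw [this, ih, show T + 1 + i = (T + i) + 1 by ring, Nat.testBit_succ]

lemma disj_iff_half {a b : ℕ} :
    Disj a b ↔ (a % 2 = 0 ∨ b % 2 = 0) ∧ Disj (a / 2) (b / 2) := by
  constructor
  · intro h
    refine ⟨?_, fun i hi => h (i + 1) ?_⟩
    · by_contra hc
      push_neg at hc
      exact h 0 (by simp [Nat.testBit_zero]; omega)
    · simpa [Nat.testBit_succ] using hi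
  · rintro ⟨h0, h⟩ i hi
    match i with
    | 0 =>
      simp [Nat.testBit_zero] at hi
      omega
    | i + 1 =>
      exact h i (by simpa [Nat.testBit_succ] using hi)

lemma choose_parity_aux : ∀ N m d : ℕ, m + d ≤ N →
    ((m + d).choose d % 2 = 1 ↔ Disj m d) := by
  intro N
  induction N with
  | zero =>
    intro m d h
    have hm : m = 0 := by omega
    have hd : d = 0 := by omega
    subst hm; subst hd
    simpa using disj_zero_left 0
  | succ N ih =>
    intro m d h
    rcases Nat.eq_zero_or_pos (m + d) with h0 | h0
    · have hm : m = 0 := by omega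
      have hd : d = 0 := by omega
      subst hm; subst hd
      simpa using disj_zero_left 0
    · have : Fact (Nat.Prime 2) := ⟨Nat.prime_two⟩
      have lucas := Choose.choose_modEq_choose_mod_mul_choose_div_nat (p := 2) (n := m + d) (k := d)
      have hmod : (m + d).choose d % 2 =
          ((m + d) % 2).choose (d % 2) * ((m + d) / 2).choose (d / 2) % 2 := lucas
      have hih : (m / 2 + d / 2).choose (d / 2) % 2 = 1 ↔ Disj (m / 2) (d / 2) :=
        ih (m / 2) (d / 2) (by omega)
      rcases Nat.mod_two_eq_zero_or_one m with hm | hm <;>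
        rcases Nat.mod_two_eq_zero_or_one d with hd | hd
      · -- 0 0
        have h1 : (m + d) % 2 = 0 := by omega
        have h2 : (m + d) / 2 = m / 2 + d / 2 := by omega
        have hdd : Disj m d ↔ Disj (m / 2) (d / 2) :=
          ⟨fun hc => (disj_iff_half.mp hc).2, fun hc => disj_iff_half.mpr ⟨Or.inl hm, hc⟩⟩
        rw [hmod, h1, hd, h2]
        simp only [Nat.choose_self, one_mul]
        rw [hih, hdd]
      · -- m even, d odd
        have h1 : (m + d) % 2 = 1 := by omega
        have h2 : (m + d) / 2 = m / 2 + d / 2 := by omega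
        have hdd : Disj m d ↔ Disj (m / 2) (d / 2) :=
          ⟨fun hc => (disj_iff_half.mp hc).2, fun hc => disj_iff_half.mpr ⟨Or.inl hm, hc⟩⟩
        rw [hmod, h1, hd, h2]
        rw [show Nat.choose 1 1 = 1 from rfl, one_mul, hih, hdd]
      · -- m odd, d even
        have h1 : (m + d) % 2 = 1 := by omega
        have h2 : (m + d) / 2 = m / 2 + d / 2 := by omega
        have hdd : Disj m d ↔ Disj (m / 2) (d / 2) :=
          ⟨fun hc => (disj_iff_half.mp hc).2, fun hc => disj_iff_half.mpr ⟨Or.inr hd, hc⟩⟩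
        rw [hmod, h1, hd, h2]
        rw [show Nat.choose 1 0 = 1 from rfl, one_mul, hih, hdd]
      · -- both odd
        have h1 : (m + d) % 2 = 0 := by omega
        rw [hmod, h1, hd]
        rw [show Nat.choose 0 1 = 0 from rfl, zero_mul]
        constructor
        · intro hc; exact absurd hc (by norm_num)
        · intro hc
          exact absurd hm (by
            have := (disj_iff_half.mp hc).1
            omega)

lemma choose_parity (m d : ℕ) : ((m + d).choose d % 2 = 1 ↔ Disj m d) :=
  choose_parity_aux (m + d) m d le_rfl

lemma disj_split {a b : ℕ} (T : ℕ) :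
    Disj a b ↔ Disj (a % 2 ^ T) (b % 2 ^ T) ∧ Disj (a / 2 ^ T) (b / 2 ^ T) := by
  constructor
  · intro h
    refine ⟨fun i hi => ?_, fun i hi => ?_⟩
    · simp only [Nat.testBit_mod_two_pow, Bool.and_eq_true] at hi
      exact h i ⟨hi.1.2, hi.2.2⟩
    · rw [testBit_div_pow, testBit_div_pow] at hi
      exact h (T + i) hi
  · rintro ⟨hlo, hhi⟩ i hi
    rcases lt_or_ge i T with hiT | hiT
    · refine hlo i ⟨?_, ?_⟩ <;> rw [Nat.testBit_mod_two_pow] <;> simp [hiT, hi.1, hi.2]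
    · refine hhi (i - T) ?_
      rw [testBit_div_pow, testBit_div_pow, Nat.add_sub_cancel' hiT]
      exact hi

lemma disj_add_lt {T : ℕ} : ∀ {a b : ℕ}, Disj a b → a < 2 ^ T → b < 2 ^ T → a + b < 2 ^ T := by
  induction T with
  | zero => intro a b _ ha hb; simp at ha hb; omega
  | succ T ih =>
    intro a b h ha hb
    obtain ⟨h0, hh⟩ := disj_iff_half.mp h
    have hp : (2:ℕ) ^ (T + 1) = 2 * 2 ^ T := by ring
    have := ih hh (by omega) (by omega)
    omega

lemma disj_of_add_eq {T : ℕ} : ∀ {x y : ℕ}, x + y = 2 ^ T - 1 → Disj x y := by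
  induction T with
  | zero => intro x y h; simp at h; obtain ⟨hx, hy⟩ := h; subst hx; subst hy; exact disj_zero_left 0
  | succ T ih =>
    intro x y h
    have hp : (2:ℕ) ^ (T + 1) = 2 * 2 ^ T := by ring
    have h1 : (1:ℕ) ≤ 2 ^ T := Nat.one_le_two_pow
    refine disj_iff_half.mpr ⟨by omega, ih (by omega)⟩

lemma disj_mul_pow {a b T : ℕ} (hb : b < 2 ^ T) : Disj (a * 2 ^ T) b := by
  have hpos : 0 < 2 ^ T := Nat.pow_pos (by norm_num)
  rw [disj_split T, Nat.mul_mod_left, Nat.mul_div_cancel _ hpos, Nat.div_eq_of_lt hb]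
  exact ⟨disj_zero_left _, disj_zero_right _⟩

lemma disj_build {m x y T : ℕ} (hx : Disj (m / 2 ^ T) x) (hy : Disj (m % 2 ^ T) y)
    (hT : y < 2 ^ T) : Disj m (x * 2 ^ T + y) := by
  rw [disj_split T]
  have hpos : 0 < 2 ^ T := Nat.pow_pos (by norm_num)
  constructor
  · rw [show x * 2 ^ T + y = 2 ^ T * x + y by ring, Nat.mul_add_mod, Nat.mod_eq_of_lt hT]
    exact hy
  · rw [show x * 2 ^ T + y = 2 ^ T * x + y by ring, Nat.mul_add_div hpos,
      Nat.div_eq_of_lt hT, Nat.add_zero]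
    exact hx

lemma disj_low {m d : ℕ} (T : ℕ) (h : Disj m d) : Disj (m % 2 ^ T) (d % 2 ^ T) :=
  ((disj_split T).mp h).1


namespace RofAux

variable (ω : ℕ) (n z : ℕ → ℕ)

/-- suffix value `m_u` -/
def msuf (u : ℕ) : ℕ := ∑ v ∈ Finset.Icc u ω, (2 ^ n v - 1) * 2 ^ (z v + tailLen ω n z (v + 1))

/-- suffix complement value `d_{κ_u}` -/
def dsum (u : ℕ) : ℕ := ∑ v ∈ Finset.Icc u ω, (2 ^ z v - 1) * 2 ^ tailLen ω n z (v + 1)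

/-- the value `d_{ℓ_u}` -/
def dlv (u : ℕ) : ℕ := dsum ω n z (u + 1) + (2 ^ n u - 1) * 2 ^ tailLen ω n z (u + 1)

lemma sum_Icc_step (f : ℕ → ℕ) {u : ℕ} (h : u ≤ ω) :
    ∑ v ∈ Finset.Icc u ω, f v = f u + ∑ v ∈ Finset.Icc (u + 1) ω, f v := by
  rw [Finset.Icc_eq_cons_Ioc h, Finset.sum_cons, Finset.Icc_add_one_left_eq_Ioc]

lemma sum_Icc_empty (f : ℕ → ℕ) {u : ℕ} (h : ω < u) : ∑ v ∈ Finset.Icc u ω, f v = 0 := by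
  rw [Finset.Icc_eq_empty (by omega), Finset.sum_empty]

lemma tail_step {u : ℕ} (h : u ≤ ω) :
    tailLen ω n z u = n u + z u + tailLen ω n z (u + 1) := by
  rw [tailLen, sum_Icc_step ω _ h]; rfl

lemma tail_end {u : ℕ} (h : ω < u) : tailLen ω n z u = 0 := by
  rw [tailLen, sum_Icc_empty ω _ h]

lemma msuf_step {u : ℕ} (h : u ≤ ω) :
    msuf ω n z u = (2 ^ n u - 1) * 2 ^ (z u + tailLen ω n z (u + 1)) + msuf ω n z (u + 1) := by
  rw [msuf, sum_Icc_step ω _ h]; rfl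

lemma msuf_end {u : ℕ} (h : ω < u) : msuf ω n z u = 0 := by
  rw [msuf, sum_Icc_empty ω _ h]

lemma dsum_step {u : ℕ} (h : u ≤ ω) :
    dsum ω n z u = (2 ^ z u - 1) * 2 ^ tailLen ω n z (u + 1) + dsum ω n z (u + 1) := by
  rw [dsum, sum_Icc_step ω _ h]; rfl

lemma dsum_end {u : ℕ} (h : ω < u) : dsum ω n z u = 0 := by
  rw [dsum, sum_Icc_empty ω _ h]

/-- downward induction helper -/
lemma revInd (P : ℕ → Prop) (base : ∀ u, ω < u → P u)
    (step : ∀ u, u ≤ ω → P (u + 1) → P u) : ∀ u, P u := by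
  have H : ∀ k u, ω + 1 - u ≤ k → P u := by
    intro k
    induction k with
    | zero => intro u h; exact base u (by omega)
    | succ k ih =>
      intro u h
      by_cases hu : ω < u
      · exact base u hu
      · exact step u (by omega) (ih (u + 1) (by omega))
  exact fun u => H (ω + 1 - u) u le_rfl

/-- key complement identity : `msuf u + dsum u + 1 = 2 ^ tailLen u` -/
lemma compl : ∀ u, msuf ω n z u + dsum ω n z u + 1 = 2 ^ tailLen ω n z u := by
  refine revInd ω (fun u => msuf ω n z u + dsum ω n z u + 1 = 2 ^ tailLen ω n z u) ?_ ?_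
  · intro u hu
    rw [msuf_end ω n z hu, dsum_end ω n z hu, tail_end ω n z hu]; rfl
  · intro u hu ih
    rw [msuf_step ω n z hu, dsum_step ω n z hu, tail_step ω n z hu]
    have e1 : (2:ℕ) ^ (z u + tailLen ω n z (u + 1)) =
        2 ^ z u * 2 ^ tailLen ω n z (u + 1) := pow_add 2 _ _
    have e2 : (2:ℕ) ^ (n u + z u + tailLen ω n z (u + 1)) =
        2 ^ n u * (2 ^ z u * 2 ^ tailLen ω n z (u + 1)) := by
      rw [pow_add, pow_add]; ring
    have h1 : (1:ℕ) ≤ 2 ^ n u := Nat.one_le_two_pow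
    have h2 : (1:ℕ) ≤ 2 ^ z u := Nat.one_le_two_pow
    have h3 : (1:ℕ) ≤ 2 ^ tailLen ω n z (u + 1) := Nat.one_le_two_pow
    rw [e1, e2]
    set A := (2:ℕ) ^ n u
    set B := (2:ℕ) ^ z u
    set C := (2:ℕ) ^ tailLen ω n z (u + 1)
    have e3 : (A - 1) * (B * C) = A * (B * C) - B * C := by rw [Nat.sub_mul, one_mul]
    have e4 : (B - 1) * C = B * C - C := by rw [Nat.sub_mul, one_mul]
    have h4 : B * C ≤ A * (B * C) := Nat.le_mul_of_pos_left _ (by omega)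
    have h5 : C ≤ B * C := Nat.le_mul_of_pos_left _ (by omega)
    omega

lemma msuf_lt (u : ℕ) : msuf ω n z u < 2 ^ tailLen ω n z u := by
  have := compl ω n z u; omega

lemma dsum_lt (u : ℕ) : dsum ω n z u < 2 ^ tailLen ω n z u := by
  have := compl ω n z u; omega

/-- lower bound on suffix: `msuf u + 2^(z u + T(u+1)) ≥ 2^(T u)` -/
lemma msuf_lb {u : ℕ} (h : u ≤ ω) :
    2 ^ tailLen ω n z u ≤ msuf ω n z u + 2 ^ (z u + tailLen ω n z (u + 1)) := by
  rw [msuf_step ω n z h, tail_step ω n z h]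
  have e2 : (2:ℕ) ^ (n u + z u + tailLen ω n z (u + 1)) =
      2 ^ n u * 2 ^ (z u + tailLen ω n z (u + 1)) := by rw [pow_add, pow_add]; ring
  have h1 : (1:ℕ) ≤ 2 ^ n u := Nat.one_le_two_pow
  set A := (2:ℕ) ^ n u
  set B := (2:ℕ) ^ (z u + tailLen ω n z (u + 1))
  have h2 : (1:ℕ) ≤ B := Nat.one_le_two_pow
  have e3 : (A - 1) * B = A * B - B := by rw [Nat.sub_mul, one_mul]
  have h4 : B ≤ A * B := Nat.le_mul_of_pos_left _ (by omega)
  rw [e2]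
  omega

lemma dsum_anti {u v : ℕ} (h : v ≤ u) : dsum ω n z u ≤ dsum ω n z v := by
  induction u, h using Nat.le_induction with
  | base => exact le_rfl
  | succ u hvu ih =>
    have hstep : dsum ω n z (u + 1) ≤ dsum ω n z u := by
      rcases le_or_gt u ω with h3 | h3
      · rw [dsum_step ω n z h3]; omega
      · rw [dsum_end ω n z (show ω < u + 1 by omega)]
        exact Nat.zero_le _
    omega

lemma dlv_add {u : ℕ} (h : u ≤ ω) :
    dlv ω n z u + (msuf ω n z (u + 1) + 1) = 2 ^ n u * 2 ^ tailLen ω n z (u + 1) := by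
  have hc := compl ω n z (u + 1)
  rw [dlv]
  have h1 : (1:ℕ) ≤ 2 ^ n u := Nat.one_le_two_pow
  set A := (2:ℕ) ^ n u
  set C := (2:ℕ) ^ tailLen ω n z (u + 1)
  have e3 : (A - 1) * C = A * C - C := by rw [Nat.sub_mul, one_mul]
  have h4 : C ≤ A * C := Nat.le_mul_of_pos_left _ (by omega)
  omega

lemma dsum_lt_dlv {u : ℕ} (hn1 : 1 ≤ n u) : dsum ω n z (u + 1) < dlv ω n z u := by
  rw [dlv]
  have h1 : (2:ℕ) ≤ 2 ^ n u :=
    le_trans (by norm_num) (Nat.pow_le_pow_right (by norm_num) hn1)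
  have h3 : (1:ℕ) ≤ 2 ^ tailLen ω n z (u + 1) := Nat.one_le_two_pow
  have : 1 * 1 ≤ (2 ^ n u - 1) * 2 ^ tailLen ω n z (u + 1) :=
    Nat.mul_le_mul (by omega) h3
  omega

lemma dlv_lt_dsum {u : ℕ} (h : u ≤ ω) (hnz : n u < z u) : dlv ω n z u < dsum ω n z u := by
  rw [dlv, dsum_step ω n z h]
  have h1 : 2 ^ n u < 2 ^ z u := Nat.pow_lt_pow_right (by norm_num) hnz
  have h0 : (1:ℕ) ≤ 2 ^ n u := Nat.one_le_two_pow
  have h3 : (0:ℕ) < 2 ^ tailLen ω n z (u + 1) := Nat.pow_pos (by norm_num)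
  have : (2 ^ n u - 1) * 2 ^ tailLen ω n z (u + 1) <
      (2 ^ z u - 1) * 2 ^ tailLen ω n z (u + 1) :=
    Nat.mul_lt_mul_of_lt_of_le (by omega) le_rfl h3
  omega

lemma Icc_one_eq_Ioc (k : ℕ) : Finset.Icc 1 k = Finset.Ioc 0 k := Finset.Icc_add_one_left_eq_Ioc 0 k

lemma kappaIdx_eq {u : ℕ} (h1 : 1 ≤ u) (h2 : u ≤ ω + 1) :
    kappaIdx ω n z u + dsum ω n z u = dsum ω n z 1 := by
  have hIccu : Finset.Icc u ω = Finset.Ioc (u - 1) ω := by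
    rw [← Finset.Icc_add_one_left_eq_Ioc]
    congr 1
    omega
  have hcong : kappaIdx ω n z u =
      ∑ v ∈ Finset.Icc 1 (u - 1), (2 ^ z v - 1) * 2 ^ tailLen ω n z (v + 1) := by
    rw [kappaIdx]
    apply Finset.sum_congr rfl
    intro v hv
    rw [Finset.mem_Icc] at hv
    congr 2
    have e1 : Finset.Icc (v + 1) (u - 1) = Finset.Ioc v (u - 1) := Finset.Icc_add_one_left_eq_Ioc v (u - 1)
    have e2 : Finset.Icc (v + 1) ω = Finset.Ioc v ω := Finset.Icc_add_one_left_eq_Ioc v ω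
    have hcons := Finset.sum_Ioc_consecutive (fun w => n w + z w)
      (show v ≤ u - 1 from hv.2) (show u - 1 ≤ ω by omega)
    rw [tailLen, tailLen, e1, e2, hIccu, ← hcons]
  rw [hcong, dsum, dsum, hIccu, Icc_one_eq_Ioc ω, Icc_one_eq_Ioc (u - 1)]
  exact Finset.sum_Ioc_consecutive _ (by omega) (by omega)

lemma ellIdx_eq {u : ℕ} (h1 : 1 ≤ u) (h2 : u ≤ ω) (hnz : n u < z u) :
    ellIdx ω n z u + dlv ω n z u = dsum ω n z 1 := by
  have hk := kappaIdx_eq ω n z h1 (by omega)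
  rw [ellIdx]
  -- (2^(z u - n u) - 1) * 2^(n u + T') + dlv u = dsum u
  have key : (2 ^ (z u - n u) - 1) * 2 ^ (n u + tailLen ω n z (u + 1)) + dlv ω n z u =
      dsum ω n z u := by
    rw [dlv, dsum_step ω n z h2]
    have e1 : (2:ℕ) ^ (n u + tailLen ω n z (u + 1)) =
        2 ^ n u * 2 ^ tailLen ω n z (u + 1) := pow_add 2 _ _
    have e2 : (2:ℕ) ^ (z u - n u) * 2 ^ n u = 2 ^ z u := by
      rw [← pow_add]
      congr 1
      omega
    have e3 : (2 ^ (z u - n u) - 1) * 2 ^ (n u + tailLen ω n z (u + 1)) =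
        2 ^ z u * 2 ^ tailLen ω n z (u + 1) - 2 ^ n u * 2 ^ tailLen ω n z (u + 1) := by
      rw [e1, Nat.sub_mul, one_mul, ← mul_assoc, e2]
    have e4 : (2 ^ n u - 1) * 2 ^ tailLen ω n z (u + 1) =
        2 ^ n u * 2 ^ tailLen ω n z (u + 1) - 2 ^ tailLen ω n z (u + 1) := by
      rw [Nat.sub_mul, one_mul]
    have e5 : (2 ^ z u - 1) * 2 ^ tailLen ω n z (u + 1) =
        2 ^ z u * 2 ^ tailLen ω n z (u + 1) - 2 ^ tailLen ω n z (u + 1) := by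
      rw [Nat.sub_mul, one_mul]
    have h1' : 2 ^ n u < 2 ^ z u := Nat.pow_lt_pow_right (by norm_num) hnz
    have h3 : (0:ℕ) < 2 ^ tailLen ω n z (u + 1) := Nat.pow_pos (by norm_num)
    have h4 : 2 ^ n u * 2 ^ tailLen ω n z (u + 1) ≤ 2 ^ z u * 2 ^ tailLen ω n z (u + 1) :=
      Nat.mul_le_mul_right _ (le_of_lt h1')
    have h5 : 2 ^ tailLen ω n z (u + 1) ≤ 2 ^ n u * 2 ^ tailLen ω n z (u + 1) :=
      Nat.le_mul_of_pos_left _ (Nat.pow_pos (by norm_num))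
    omega
  omega

/-- `m = msuf 1` -/
lemma cbe_eq_msuf : cbeNum ω n z = msuf ω n z 1 := rfl

lemma cbe_even (hz : ∀ u ∈ Finset.Icc 1 ω, 1 ≤ z u) : 2 ∣ cbeNum ω n z := by
  rw [cbeNum]
  apply Finset.dvd_sum
  intro v hv
  refine dvd_mul_of_dvd_right (dvd_pow_self 2 ?_) _
  have := hz v hv
  omega

lemma eVal_cbe (hz : ∀ u ∈ Finset.Icc 1 ω, 1 ≤ z u) : eVal (cbeNum ω n z) = 0 := by
  apply padicValNat.eq_zero_of_not_dvd
  have := cbe_even ω n z hz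
  omega

lemma size_cbe (hω : 1 ≤ ω) (hn1 : 1 ≤ n 1) : Nat.size (cbeNum ω n z) = tailLen ω n z 1 := by
  have hub : cbeNum ω n z < 2 ^ tailLen ω n z 1 := by
    rw [cbe_eq_msuf]; exact msuf_lt ω n z 1
  have hT : tailLen ω n z 1 = n 1 + z 1 + tailLen ω n z 2 := tail_step ω n z hω
  have hlb : 2 ^ (tailLen ω n z 1 - 1) ≤ cbeNum ω n z := by
    rw [cbe_eq_msuf, msuf_step ω n z hω]
    have e1 : tailLen ω n z 1 - 1 = (n 1 - 1) + (z 1 + tailLen ω n z 2) := by omega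
    rw [e1, pow_add]
    apply Nat.le_add_right_of_le
    apply Nat.mul_le_mul_right
    have e2 : (2:ℕ) ^ n 1 = 2 * 2 ^ (n 1 - 1) := by
      rw [← pow_succ']
      congr 1
      omega
    have : (1:ℕ) ≤ 2 ^ (n 1 - 1) := Nat.one_le_two_pow
    omega
  have h1 := Nat.size_le.mpr hub
  have h2 := Nat.lt_size.mpr hlb
  omega

lemma d0_eq (hω : 1 ≤ ω) (hn1 : 1 ≤ n 1) : d0Val (cbeNum ω n z) = dsum ω n z 1 := by
  rw [d0Val, size_cbe ω n z hω hn1, cbe_eq_msuf]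
  have := compl ω n z 1
  omega

lemma dVal_eq (hω : 1 ≤ ω) (hn1 : 1 ≤ n 1) (hz : ∀ u ∈ Finset.Icc 1 ω, 1 ≤ z u) (ℓ : ℕ) :
    dVal (cbeNum ω n z) ℓ = dsum ω n z 1 - ℓ := by
  rw [dVal, d0_eq ω n z hω hn1, eVal_cbe ω n z hz, pow_zero, one_mul]

lemma tVal_eq (hω : 1 ≤ ω) (hn1 : 1 ≤ n 1) (hz : ∀ u ∈ Finset.Icc 1 ω, 1 ≤ z u) :
    tVal (cbeNum ω n z) = dsum ω n z 1 - 1 := by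
  rw [tVal, d0_eq ω n z hω hn1, eVal_cbe ω n z hz, pow_zero, Nat.div_one]

lemma rStep_eq (hω : 1 ≤ ω) (hn1 : 1 ≤ n 1) (hz : ∀ u ∈ Finset.Icc 1 ω, 1 ≤ z u) (ℓ S : ℕ) :
    rStep (cbeNum ω n z) ℓ S =
      if (cbeNum ω n z + (dsum ω n z 1 - ℓ)).choose (dsum ω n z 1 - ℓ) % 2 = 1 then
        (cbeNum ω n z - S) / (dsum ω n z 1 - ℓ)
      else 0 := by
  rw [rStep, dVal_eq ω n z hω hn1 hz, eVal_cbe ω n z hz, pow_zero]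
  norm_num

/-- decomposition of `m` at level `u` -/
lemma mdecomp : ∀ u, 1 ≤ u → u ≤ ω + 1 →
    ∃ q, cbeNum ω n z = q * 2 ^ tailLen ω n z u + msuf ω n z u := by
  intro u h1 h2
  induction u with
  | zero => omega
  | succ u ih =>
    rcases Nat.eq_or_lt_of_le h1 with h0 | h0
    · exact ⟨0, by rw [← h0, cbe_eq_msuf]; simp⟩
    · obtain ⟨q, hq⟩ := ih (by omega) (by omega)
      refine ⟨q * 2 ^ (n u + z u) + (2 ^ n u - 1) * 2 ^ z u, ?_⟩
      rw [hq, msuf_step ω n z (show u ≤ ω by omega), tail_step ω n z (show u ≤ ω by omega)]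
      rw [pow_add, pow_add, pow_add]
      ring

lemma m_mod {u : ℕ} (h1 : 1 ≤ u) (h2 : u ≤ ω + 1) :
    cbeNum ω n z % 2 ^ tailLen ω n z u = msuf ω n z u := by
  obtain ⟨q, hq⟩ := mdecomp ω n z u h1 h2
  rw [hq, Nat.mul_add_mod' q _ _, Nat.mod_eq_of_lt (msuf_lt ω n z u)]

/-- the bits of `m` just above `tailLen (u+1)` are `z u` zeros -/
lemma m_div {u : ℕ} (h1 : 1 ≤ u) (h2 : u ≤ ω) :
    ∃ p, cbeNum ω n z / 2 ^ tailLen ω n z (u + 1) = p * 2 ^ z u := by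
  obtain ⟨q, hq⟩ := mdecomp ω n z u h1 (by omega)
  refine ⟨q * 2 ^ n u + (2 ^ n u - 1), ?_⟩
  rw [hq, msuf_step ω n z h2, tail_step ω n z h2]
  have hms := msuf_lt ω n z (u + 1)
  have e : q * 2 ^ (n u + z u + tailLen ω n z (u + 1)) +
      ((2 ^ n u - 1) * 2 ^ (z u + tailLen ω n z (u + 1)) + msuf ω n z (u + 1)) =
      2 ^ tailLen ω n z (u + 1) * ((q * 2 ^ n u + (2 ^ n u - 1)) * 2 ^ z u) +
        msuf ω n z (u + 1) := by
    rw [pow_add, pow_add]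
    ring
  rw [e, Nat.mul_add_div (Nat.pow_pos (by norm_num)),
    Nat.div_eq_of_lt hms, Nat.add_zero]

lemma parity_kappa {u : ℕ} (h1 : 1 ≤ u) (h2 : u ≤ ω + 1) :
    (cbeNum ω n z + dsum ω n z u).choose (dsum ω n z u) % 2 = 1 := by
  rw [choose_parity]
  have hd : dsum ω n z u = 0 * 2 ^ tailLen ω n z u + dsum ω n z u := by ring
  rw [hd]
  apply disj_build
  · exact disj_zero_right _
  · rw [m_mod ω n z h1 h2]
    exact disj_of_add_eq (T := tailLen ω n z u) (by have := compl ω n z u; omega)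
  · exact dsum_lt ω n z u

lemma parity_ell {u : ℕ} (h1 : 1 ≤ u) (h2 : u ≤ ω) (hnz : n u < z u) :
    (cbeNum ω n z + dlv ω n z u).choose (dlv ω n z u) % 2 = 1 := by
  rw [choose_parity]
  have hd : dlv ω n z u = (2 ^ n u - 1) * 2 ^ tailLen ω n z (u + 1) + dsum ω n z (u + 1) := by
    rw [dlv]; ring
  rw [hd]
  apply disj_build
  · obtain ⟨p, hp⟩ := m_div ω n z h1 h2
    rw [hp]
    apply disj_mul_pow
    have : (2:ℕ) ^ n u ≤ 2 ^ z u := Nat.pow_le_pow_right (by norm_num) (le_of_lt hnz)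
    have : (1:ℕ) ≤ 2 ^ n u := Nat.one_le_two_pow
    omega
  · rw [m_mod ω n z (by omega) (by omega)]
    exact disj_of_add_eq (T := tailLen ω n z (u + 1)) (by have := compl ω n z (u + 1); omega)
  · exact dsum_lt ω n z (u + 1)

lemma partialS_succ (m ℓ : ℕ) :
    partialS m (ℓ + 1) = partialS m ℓ + dVal m ℓ * rStep m ℓ (partialS m ℓ) := rfl

lemma partialS_const {m e S : ℕ} (s : ℕ) (hs : partialS m s = S)
    (hz : ∀ ℓ, s ≤ ℓ → ℓ < e → rStep m ℓ S = 0) :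
    ∀ ℓ, s ≤ ℓ → ℓ ≤ e → partialS m ℓ = S := by
  intro ℓ hℓ hle
  induction ℓ, hℓ using Nat.le_induction with
  | base => exact hs
  | succ ℓ hsℓ ih =>
    have h1 := ih (by omega)
    rw [partialS_succ, h1, hz ℓ hsℓ (by omega), mul_zero, add_zero]

lemma zstepB {u ℓ S : ℕ} (hω : 1 ≤ ω) (hn1 : 1 ≤ n 1)
    (hzz : ∀ u ∈ Finset.Icc 1 ω, 1 ≤ z u) (h1 : 1 ≤ u) (h2 : u ≤ ω)
    (hSinv : S + 2 ^ n u * (msuf ω n z (u + 1) + 1) = cbeNum ω n z + 1)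
    (hd1 : dlv ω n z u < dsum ω n z 1 - ℓ) (hℓ : ℓ < dsum ω n z 1) :
    rStep (cbeNum ω n z) ℓ S = 0 := by
  rw [rStep_eq ω n z hω hn1 hzz]
  set m := cbeNum ω n z
  set d := dsum ω n z 1 - ℓ with hdd
  by_cases hpar : (m + d).choose d % 2 = 1
  · rw [if_pos hpar]
    have hpos : (0:ℕ) < 2 ^ tailLen ω n z (u + 1) := Nat.pow_pos (by norm_num)
    have hDisj : Disj m d := (choose_parity m d).mp hpar
    have hylow : Disj (msuf ω n z (u + 1)) (d % 2 ^ tailLen ω n z (u + 1)) := by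
      have := disj_low (m := m) (d := d) (tailLen ω n z (u + 1)) hDisj
      rwa [m_mod ω n z (by omega) (by omega)] at this
    have hylt : msuf ω n z (u + 1) + d % 2 ^ tailLen ω n z (u + 1) <
        2 ^ tailLen ω n z (u + 1) :=
      disj_add_lt hylow (msuf_lt ω n z (u + 1)) (Nat.mod_lt _ hpos)
    have hcompl := compl ω n z (u + 1)
    have hyD : d % 2 ^ tailLen ω n z (u + 1) ≤ dsum ω n z (u + 1) := by omega
    have hdxy : 2 ^ tailLen ω n z (u + 1) * (d / 2 ^ tailLen ω n z (u + 1)) +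
        d % 2 ^ tailLen ω n z (u + 1) = d := Nat.div_add_mod d _
    have hdlv : dlv ω n z u =
        dsum ω n z (u + 1) + (2 ^ n u - 1) * 2 ^ tailLen ω n z (u + 1) := rfl
    have hone : (1:ℕ) ≤ 2 ^ n u := Nat.one_le_two_pow
    have hsub : (2 ^ n u - 1) * 2 ^ tailLen ω n z (u + 1) =
        2 ^ n u * 2 ^ tailLen ω n z (u + 1) - 2 ^ tailLen ω n z (u + 1) := by
      rw [Nat.sub_mul, one_mul]
    have hxb : 2 ^ n u ≤ d / 2 ^ tailLen ω n z (u + 1) := by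
      by_contra hc
      push_neg at hc
      have h3 : d / 2 ^ tailLen ω n z (u + 1) + 1 ≤ 2 ^ n u := hc
      have h4 : (d / 2 ^ tailLen ω n z (u + 1) + 1) * 2 ^ tailLen ω n z (u + 1) ≤
          2 ^ n u * 2 ^ tailLen ω n z (u + 1) := Nat.mul_le_mul_right _ h3
      have h5 : (d / 2 ^ tailLen ω n z (u + 1) + 1) * 2 ^ tailLen ω n z (u + 1) =
          2 ^ tailLen ω n z (u + 1) * (d / 2 ^ tailLen ω n z (u + 1)) +
            2 ^ tailLen ω n z (u + 1) := by ring
      omega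
    have hdb : 2 ^ n u * 2 ^ tailLen ω n z (u + 1) ≤ d := by
      have h3 : 2 ^ n u * 2 ^ tailLen ω n z (u + 1) ≤
          (d / 2 ^ tailLen ω n z (u + 1)) * 2 ^ tailLen ω n z (u + 1) :=
        Nat.mul_le_mul_right _ hxb
      have h4 : (d / 2 ^ tailLen ω n z (u + 1)) * 2 ^ tailLen ω n z (u + 1) =
          2 ^ tailLen ω n z (u + 1) * (d / 2 ^ tailLen ω n z (u + 1)) := by ring
      omega
    have hmS : m - S < d := by
      have h5 : 2 ^ n u * (msuf ω n z (u + 1) + 1) ≤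
          2 ^ n u * 2 ^ tailLen ω n z (u + 1) :=
        Nat.mul_le_mul_left _ (msuf_lt ω n z (u + 1))
      omega
    rw [Nat.div_eq_of_lt hmS]
  · rw [if_neg hpar]

lemma zstepD {u ℓ S : ℕ} (hω : 1 ≤ ω) (hn1 : 1 ≤ n 1)
    (hzz : ∀ u ∈ Finset.Icc 1 ω, 1 ≤ z u) (h1 : 1 ≤ u) (h2 : u ≤ ω)
    (hSinv : S + (2 ^ n u + 1) * (msuf ω n z (u + 1) + 1) =
      cbeNum ω n z + 1 + 2 ^ n u * 2 ^ tailLen ω n z (u + 1))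
    (hd1 : dsum ω n z (u + 1) < dsum ω n z 1 - ℓ) (hℓ : ℓ < dsum ω n z 1) :
    rStep (cbeNum ω n z) ℓ S = 0 := by
  rw [rStep_eq ω n z hω hn1 hzz]
  set m := cbeNum ω n z
  set d := dsum ω n z 1 - ℓ with hdd
  by_cases hpar : (m + d).choose d % 2 = 1
  · rw [if_pos hpar]
    have hpos : (0:ℕ) < 2 ^ tailLen ω n z (u + 1) := Nat.pow_pos (by norm_num)
    have hDisj : Disj m d := (choose_parity m d).mp hpar
    have hylow : Disj (msuf ω n z (u + 1)) (d % 2 ^ tailLen ω n z (u + 1)) := by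
      have := disj_low (m := m) (d := d) (tailLen ω n z (u + 1)) hDisj
      rwa [m_mod ω n z (by omega) (by omega)] at this
    have hylt : msuf ω n z (u + 1) + d % 2 ^ tailLen ω n z (u + 1) <
        2 ^ tailLen ω n z (u + 1) :=
      disj_add_lt hylow (msuf_lt ω n z (u + 1)) (Nat.mod_lt _ hpos)
    have hcompl := compl ω n z (u + 1)
    have hyD : d % 2 ^ tailLen ω n z (u + 1) ≤ dsum ω n z (u + 1) := by omega
    have hdxy : 2 ^ tailLen ω n z (u + 1) * (d / 2 ^ tailLen ω n z (u + 1)) +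
        d % 2 ^ tailLen ω n z (u + 1) = d := Nat.div_add_mod d _
    have hxb : 1 ≤ d / 2 ^ tailLen ω n z (u + 1) := by
      rcases Nat.eq_zero_or_pos (d / 2 ^ tailLen ω n z (u + 1)) with h0 | h0
      · exfalso
        rw [h0, mul_zero, zero_add] at hdxy
        omega
      · exact h0
    have hdb : 2 ^ tailLen ω n z (u + 1) ≤ d := by
      have h3 : 2 ^ tailLen ω n z (u + 1) * 1 ≤
          2 ^ tailLen ω n z (u + 1) * (d / 2 ^ tailLen ω n z (u + 1)) :=
        Nat.mul_le_mul_left _ hxb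
      omega
    have hmS : m - S < d := by
      have h5 : (2 ^ n u + 1) * (msuf ω n z (u + 1) + 1) ≤
          (2 ^ n u + 1) * 2 ^ tailLen ω n z (u + 1) :=
        Nat.mul_le_mul_left _ (msuf_lt ω n z (u + 1))
      have h6 : (2 ^ n u + 1) * 2 ^ tailLen ω n z (u + 1) =
          2 ^ n u * 2 ^ tailLen ω n z (u + 1) + 2 ^ tailLen ω n z (u + 1) := by ring
      omega
    rw [Nat.div_eq_of_lt hmS]
  · rw [if_neg hpar]

lemma blockStep (hω : 1 ≤ ω) (hn1 : 1 ≤ n 1) (hzz : ∀ v ∈ Finset.Icc 1 ω, 1 ≤ z v)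
    (hnn : ∀ v ∈ Finset.Icc 1 ω, 1 ≤ n v) (hmono : ∀ v, 1 ≤ v → v < ω → n v < n (v + 1))
    (hsp : ∀ v ∈ Finset.Icc 1 ω, n v < z v)
    {u a : ℕ} (h1 : 1 ≤ u) (h2 : u ≤ ω) (ha : a + 1 ≤ 2 ^ n u)
    (hS : partialS (cbeNum ω n z) (dsum ω n z 1 - dsum ω n z u) +
        (a + 1) * (msuf ω n z u + 1) = cbeNum ω n z + 1 + a * 2 ^ tailLen ω n z u) :
    rVal (cbeNum ω n z) (dsum ω n z 1 - dsum ω n z u) = 2 ^ n u - a - 1 ∧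
    rVal (cbeNum ω n z) (dsum ω n z 1 - dlv ω n z u) = 1 ∧
    (∀ ℓ, dsum ω n z 1 - dsum ω n z u < ℓ → ℓ < dsum ω n z 1 - dlv ω n z u →
      rVal (cbeNum ω n z) ℓ = 0) ∧
    (∀ ℓ, dsum ω n z 1 - dlv ω n z u < ℓ → ℓ < dsum ω n z 1 - dsum ω n z (u + 1) →
      rVal (cbeNum ω n z) ℓ = 0) ∧
    partialS (cbeNum ω n z) (dsum ω n z 1 - dsum ω n z (u + 1)) +
        (2 ^ n u + 1) * (msuf ω n z (u + 1) + 1) =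
      cbeNum ω n z + 1 + 2 ^ n u * 2 ^ tailLen ω n z (u + 1) := by
  have hnu : 1 ≤ n u := hnn u (Finset.mem_Icc.mpr ⟨h1, h2⟩)
  have hnz : n u < z u := hsp u (Finset.mem_Icc.mpr ⟨h1, h2⟩)
  set m := cbeNum ω n z with hm
  -- abbreviations as equations
  have hb2 : (2:ℕ) ≤ 2 ^ n u := le_trans (by norm_num)
    (Nat.pow_le_pow_right (by norm_num) hnu)
  have hzb : 2 * 2 ^ n u ≤ 2 ^ z u := by
    calc 2 * 2 ^ n u = 2 ^ (n u + 1) := by rw [pow_succ]; ring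
    _ ≤ 2 ^ z u := Nat.pow_le_pow_right (by norm_num) (by omega)
  have f1 : dsum ω n z (u + 1) < dlv ω n z u := dsum_lt_dlv ω n z hnu
  have f2 : dlv ω n z u < dsum ω n z u := dlv_lt_dsum ω n z h2 hnz
  have f3 : dsum ω n z u ≤ dsum ω n z 1 := dsum_anti ω n z h1
  have f4 := compl ω n z u
  have f5 := compl ω n z (u + 1)
  have f6 : dlv ω n z u + (msuf ω n z (u + 1) + 1) =
      2 ^ n u * 2 ^ tailLen ω n z (u + 1) := dlv_add ω n z h2
  have f7 : msuf ω n z u + 1 =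
      (2 ^ n u - 1) * (2 ^ z u * 2 ^ tailLen ω n z (u + 1)) + (msuf ω n z (u + 1) + 1) := by
    rw [msuf_step ω n z h2, pow_add]
    ring
  have f8 : (2:ℕ) ^ tailLen ω n z u =
      2 ^ n u * (2 ^ z u * 2 ^ tailLen ω n z (u + 1)) := by
    rw [tail_step ω n z h2, pow_add, pow_add, mul_assoc]
  have f9 : dsum ω n z u + (msuf ω n z u + 1) = 2 ^ tailLen ω n z u := by omega
  have hT'pos : (0:ℕ) < 2 ^ tailLen ω n z (u + 1) := Nat.pow_pos (by norm_num)
  have hP'lt : msuf ω n z (u + 1) + 1 ≤ 2 ^ tailLen ω n z (u + 1) := msuf_lt ω n z (u + 1)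
  -- the key division identity
  have key : m + 1 = partialS m (dsum ω n z 1 - dsum ω n z u) +
      (2 ^ n u - a - 1) * dsum ω n z u + 2 ^ n u * (msuf ω n z (u + 1) + 1) := by
    have c1 : a ≤ 2 ^ n u := by omega
    have c2 : 1 ≤ 2 ^ n u - a := by omega
    have c3 : 1 ≤ 2 ^ n u := by omega
    zify [c1, c2, c3] at hS f7 f8 f9 ⊢
    linear_combination (-1 : ℤ) * hS + (2 ^ n u : ℤ) * f7 - ((2 ^ n u : ℤ) - 1) * f8 -
      ((2 ^ n u : ℤ) - a - 1) * f9
  -- remainder bound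
  have hrem : 2 ^ n u * (msuf ω n z (u + 1) + 1) - 1 < dsum ω n z u := by
    have h5 : 2 ^ n u * (msuf ω n z (u + 1) + 1) ≤
        2 ^ n u * 2 ^ tailLen ω n z (u + 1) := Nat.mul_le_mul_left _ hP'lt
    have h6 : 2 ^ n u * 2 ^ tailLen ω n z (u + 1) ≤
        (2 ^ z u - 1) * 2 ^ tailLen ω n z (u + 1) :=
      Nat.mul_le_mul_right _ (by omega)
    have h7 := dsum_step ω n z h2
    omega
  have hDpos : 0 < dsum ω n z u := by omega
  have hbP'pos : 1 ≤ 2 ^ n u * (msuf ω n z (u + 1) + 1) :=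
    Nat.one_le_iff_ne_zero.mpr (by positivity)
  -- value of r at κ_u
  have hκd : dsum ω n z 1 - (dsum ω n z 1 - dsum ω n z u) = dsum ω n z u := by omega
  have hmS0 : m - partialS m (dsum ω n z 1 - dsum ω n z u) =
      (2 ^ n u - a - 1) * dsum ω n z u + (2 ^ n u * (msuf ω n z (u + 1) + 1) - 1) := by
    omega
  have rκ : rVal m (dsum ω n z 1 - dsum ω n z u) = 2 ^ n u - a - 1 := by
    rw [rVal, rStep_eq ω n z hω hn1 hzz, hκd, if_pos (parity_kappa ω n z h1 (by omega)), hmS0]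
    rw [show (2 ^ n u - a - 1) * dsum ω n z u + (2 ^ n u * (msuf ω n z (u + 1) + 1) - 1) =
        dsum ω n z u * (2 ^ n u - a - 1) + (2 ^ n u * (msuf ω n z (u + 1) + 1) - 1) by ring,
      Nat.mul_add_div hDpos, Nat.div_eq_of_lt hrem, add_zero]
  -- partial sum after κ_u
  have hSB : partialS m (dsum ω n z 1 - dsum ω n z u + 1) =
      partialS m (dsum ω n z 1 - dsum ω n z u) + dsum ω n z u * (2 ^ n u - a - 1) := by
    rw [partialS_succ, ← rVal, rκ, dVal_eq ω n z hω hn1 hzz, hκd]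
  have hSBinv : (partialS m (dsum ω n z 1 - dsum ω n z u) +
      dsum ω n z u * (2 ^ n u - a - 1)) + 2 ^ n u * (msuf ω n z (u + 1) + 1) = m + 1 := by
    have : dsum ω n z u * (2 ^ n u - a - 1) = (2 ^ n u - a - 1) * dsum ω n z u := mul_comm _ _
    omega
  set SB := partialS m (dsum ω n z 1 - dsum ω n z u) + dsum ω n z u * (2 ^ n u - a - 1)
    with hSBdef
  -- zeros between κ_u and ℓ_u
  have hzB : ∀ ℓ, dsum ω n z 1 - dsum ω n z u < ℓ → ℓ < dsum ω n z 1 - dlv ω n z u →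
      rStep m ℓ SB = 0 := by
    intro ℓ hℓ1 hℓ2
    exact zstepB ω n z hω hn1 hzz h1 h2 hSBinv (by omega) (by omega)
  have hconstB : ∀ ℓ, dsum ω n z 1 - dsum ω n z u + 1 ≤ ℓ →
      ℓ ≤ dsum ω n z 1 - dlv ω n z u → partialS m ℓ = SB := by
    apply partialS_const _ hSB
    intro ℓ hℓ1 hℓ2
    exact hzB ℓ (by omega) (by omega)
  have zerosB : ∀ ℓ, dsum ω n z 1 - dsum ω n z u < ℓ → ℓ < dsum ω n z 1 - dlv ω n z u →
      rVal m ℓ = 0 := by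
    intro ℓ hℓ1 hℓ2
    rw [rVal, hconstB ℓ (by omega) (by omega)]
    exact hzB ℓ hℓ1 hℓ2
  -- value of r at ℓ_u
  have hLd : dsum ω n z 1 - (dsum ω n z 1 - dlv ω n z u) = dlv ω n z u := by omega
  have hSL : partialS m (dsum ω n z 1 - dlv ω n z u) = SB :=
    hconstB _ (by omega) le_rfl
  -- lower bound needed for r_{ℓ_u} = 1
  have hlow : 2 ^ n u * 2 ^ tailLen ω n z (u + 1) + 1 ≤
      2 ^ n u * (msuf ω n z (u + 1) + 1) + (msuf ω n z (u + 1) + 1) := by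
    rcases Nat.eq_or_lt_of_le h2 with hu | hu
    · -- u = ω
      have hT0 : tailLen ω n z (u + 1) = 0 := tail_end ω n z (by omega)
      have hm0 : msuf ω n z (u + 1) = 0 := msuf_end ω n z (by omega)
      rw [hT0, hm0]
      simp
    · -- u < ω
      have hn' : n u < n (u + 1) := hmono u h1 (by omega)
      have hb' : 2 * 2 ^ n u ≤ 2 ^ n (u + 1) := by
        calc 2 * 2 ^ n u = 2 ^ (n u + 1) := by rw [pow_succ]; ring
        _ ≤ 2 ^ n (u + 1) := Nat.pow_le_pow_right (by norm_num) (by omega)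
      have hV : (2:ℕ) ^ tailLen ω n z (u + 1) =
          2 ^ n (u + 1) * (2 ^ z (u + 1) * 2 ^ tailLen ω n z (u + 1 + 1)) := by
        rw [tail_step ω n z (by omega), pow_add, pow_add, mul_assoc]
      have hmsb : 2 ^ tailLen ω n z (u + 1) ≤
          msuf ω n z (u + 1) + 2 ^ (z (u + 1) + tailLen ω n z (u + 2)) :=
        msuf_lb ω n z (by omega)
      rw [pow_add] at hmsb
      have hVpos0 : 0 < (2:ℕ) ^ z (u + 1) * 2 ^ tailLen ω n z (u + 1 + 1) := by positivity
      set V := (2:ℕ) ^ z (u + 1) * 2 ^ tailLen ω n z (u + 1 + 1) with hVdef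
      have hVpos : 1 ≤ V := hVpos0
      have g1 : (2 * 2 ^ n u) * V ≤ 2 ^ n (u + 1) * V := Nat.mul_le_mul_right _ hb'
      have g2 : (2 * 2 ^ n u) * V = 2 * (2 ^ n u * V) := by ring
      have g3 : 2 ^ n u * (msuf ω n z (u + 1) + 1 + V) ≥
          2 ^ n u * (2 ^ tailLen ω n z (u + 1) + 1) := Nat.mul_le_mul_left _ (by omega)
      have g4 : 2 ^ n u * (msuf ω n z (u + 1) + 1 + V) =
          2 ^ n u * (msuf ω n z (u + 1) + 1) + 2 ^ n u * V := by ring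
      have g5 : 2 ^ n u * (2 ^ tailLen ω n z (u + 1) + 1) =
          2 ^ n u * 2 ^ tailLen ω n z (u + 1) + 2 ^ n u := by ring
      have g6 : V ≤ 2 ^ n u * V := Nat.le_mul_of_pos_left _ (by omega)
      -- P' ≥ 2^{T'} - V + 1 ≥ 2*(2^{n u} * V) - V + 1
      omega
  have hup : 2 ^ n u * (msuf ω n z (u + 1) + 1) + 2 * (msuf ω n z (u + 1) + 1) ≤
      2 * (2 ^ n u * 2 ^ tailLen ω n z (u + 1)) := by
    have g1 : (2 ^ n u + 2) * (msuf ω n z (u + 1) + 1) ≤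
        (2 ^ n u + 2) * 2 ^ tailLen ω n z (u + 1) := Nat.mul_le_mul_left _ hP'lt
    have g2 : (2 ^ n u + 2) * 2 ^ tailLen ω n z (u + 1) ≤
        (2 * 2 ^ n u) * 2 ^ tailLen ω n z (u + 1) := Nat.mul_le_mul_right _ (by omega)
    have g3 : (2 ^ n u + 2) * (msuf ω n z (u + 1) + 1) =
        2 ^ n u * (msuf ω n z (u + 1) + 1) + 2 * (msuf ω n z (u + 1) + 1) := by ring
    have g4 : (2 * 2 ^ n u) * 2 ^ tailLen ω n z (u + 1) =
        2 * (2 ^ n u * 2 ^ tailLen ω n z (u + 1)) := by ring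
    omega
  have rL : rVal m (dsum ω n z 1 - dlv ω n z u) = 1 := by
    rw [rVal, hSL, rStep_eq ω n z hω hn1 hzz, hLd, if_pos (parity_ell ω n z h1 h2 hnz)]
    have hmSB : m - SB = 2 ^ n u * (msuf ω n z (u + 1) + 1) - 1 := by omega
    rw [hmSB]
    apply Nat.div_eq_of_lt_le
    · rw [one_mul]; omega
    · rw [show (1 + 1) * dlv ω n z u = 2 * dlv ω n z u by ring]; omega
  -- partial sum after ℓ_u
  have hSL1 : partialS m (dsum ω n z 1 - dlv ω n z u + 1) = SB + dlv ω n z u := by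
    rw [partialS_succ, ← rVal, rL, hSL, dVal_eq ω n z hω hn1 hzz, hLd, mul_one]
  have hnewinv : (SB + dlv ω n z u) + (2 ^ n u + 1) * (msuf ω n z (u + 1) + 1) =
      m + 1 + 2 ^ n u * 2 ^ tailLen ω n z (u + 1) := by
    have : (2 ^ n u + 1) * (msuf ω n z (u + 1) + 1) =
        2 ^ n u * (msuf ω n z (u + 1) + 1) + (msuf ω n z (u + 1) + 1) := by ring
    omega
  -- zeros between ℓ_u and κ_{u+1}
  have hzD : ∀ ℓ, dsum ω n z 1 - dlv ω n z u < ℓ → ℓ < dsum ω n z 1 - dsum ω n z (u + 1) →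
      rStep m ℓ (SB + dlv ω n z u) = 0 := by
    intro ℓ hℓ1 hℓ2
    exact zstepD ω n z hω hn1 hzz h1 h2 hnewinv (by omega) (by omega)
  have hconstD : ∀ ℓ, dsum ω n z 1 - dlv ω n z u + 1 ≤ ℓ →
      ℓ ≤ dsum ω n z 1 - dsum ω n z (u + 1) → partialS m ℓ = SB + dlv ω n z u := by
    apply partialS_const _ hSL1
    intro ℓ hℓ1 hℓ2
    exact hzD ℓ (by omega) (by omega)
  have zerosD : ∀ ℓ, dsum ω n z 1 - dlv ω n z u < ℓ → ℓ < dsum ω n z 1 - dsum ω n z (u + 1) →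
      rVal m ℓ = 0 := by
    intro ℓ hℓ1 hℓ2
    rw [rVal, hconstD ℓ (by omega) (by omega)]
    exact hzD ℓ hℓ1 hℓ2
  have hfinal : partialS m (dsum ω n z 1 - dsum ω n z (u + 1)) = SB + dlv ω n z u :=
    hconstD _ (by omega) le_rfl
  exact ⟨rκ, rL, zerosB, zerosD, by rw [hfinal]; exact hnewinv⟩

/-- the accumulated value `a` at stage `u` -/
def aV (u : ℕ) : ℕ := if u = 1 then 0 else 2 ^ n (u - 1)

lemma aV_bound (hnn : ∀ v ∈ Finset.Icc 1 ω, 1 ≤ n v)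
    (hmono : ∀ v, 1 ≤ v → v < ω → n v < n (v + 1))
    {u : ℕ} (h1 : 1 ≤ u) (h2 : u ≤ ω) : aV n u + 1 ≤ 2 ^ n u := by
  rw [aV]
  by_cases hu : u = 1
  · rw [if_pos hu]
    have : (1:ℕ) ≤ 2 ^ n u := Nat.one_le_two_pow
    omega
  · rw [if_neg hu]
    have h3 : n (u - 1) < n u := by
      have := hmono (u - 1) (by omega) (by omega)
      have e : u - 1 + 1 = u := by omega
      rwa [e] at this
    have := Nat.pow_lt_pow_right (show 1 < 2 by norm_num) h3
    omega

lemma master (hω : 1 ≤ ω) (hn1 : 1 ≤ n 1) (hzz : ∀ v ∈ Finset.Icc 1 ω, 1 ≤ z v)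
    (hnn : ∀ v ∈ Finset.Icc 1 ω, 1 ≤ n v) (hmono : ∀ v, 1 ≤ v → v < ω → n v < n (v + 1))
    (hsp : ∀ v ∈ Finset.Icc 1 ω, n v < z v) :
    ∀ u, 1 ≤ u → u ≤ ω + 1 →
    (partialS (cbeNum ω n z) (dsum ω n z 1 - dsum ω n z u) + (aV n u + 1) * (msuf ω n z u + 1)
        = cbeNum ω n z + 1 + aV n u * 2 ^ tailLen ω n z u)
    ∧ (∑ ℓ ∈ Finset.range (dsum ω n z 1 - dsum ω n z u), rVal (cbeNum ω n z) ℓ = aV n u)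
    ∧ (∀ ℓ, ℓ < dsum ω n z 1 - dsum ω n z u →
        (∀ v, 1 ≤ v → v ≤ ω → ℓ ≠ dsum ω n z 1 - dsum ω n z v ∧
          ℓ ≠ dsum ω n z 1 - dlv ω n z v) → rVal (cbeNum ω n z) ℓ = 0) := by
  intro u h1 h2
  induction u, h1 using Nat.le_induction with
  | base =>
    have h0 : dsum ω n z 1 - dsum ω n z 1 = 0 := by omega
    have haV : aV n 1 = 0 := if_pos rfl
    refine ⟨?_, ?_, ?_⟩
    · rw [h0, haV, show partialS (cbeNum ω n z) 0 = 0 from rfl, cbe_eq_msuf]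
      ring
    · rw [h0, haV, Finset.range_zero, Finset.sum_empty]
    · intro ℓ hℓ _
      omega
  | succ u h1 ih =>
    have h2' : u ≤ ω := by omega
    obtain ⟨P1, P2, P3⟩ := ih (by omega)
    have ha := aV_bound ω n hnn hmono h1 h2'
    obtain ⟨rκ, rL, zB, zD, Pnew⟩ :=
      blockStep ω n z hω hn1 hzz hnn hmono hsp h1 h2' ha P1
    have haV' : aV n (u + 1) = 2 ^ n u := by
      rw [aV, if_neg (by omega)]
      norm_num
    -- ordering facts
    have hnu : 1 ≤ n u := hnn u (Finset.mem_Icc.mpr ⟨h1, h2'⟩)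
    have hnz : n u < z u := hsp u (Finset.mem_Icc.mpr ⟨h1, h2'⟩)
    have f1 : dsum ω n z (u + 1) < dlv ω n z u := dsum_lt_dlv ω n z hnu
    have f2 : dlv ω n z u < dsum ω n z u := dlv_lt_dsum ω n z h2' hnz
    have f3 : dsum ω n z u ≤ dsum ω n z 1 := dsum_anti ω n z h1
    refine ⟨by rw [haV']; exact Pnew, ?_, ?_⟩
    · -- the sum
      rw [haV']
      have e0 : ∑ ℓ ∈ Finset.range (dsum ω n z 1 - dsum ω n z (u + 1)),
          rVal (cbeNum ω n z) ℓ =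
          ∑ ℓ ∈ Finset.range (dsum ω n z 1 - dsum ω n z u), rVal (cbeNum ω n z) ℓ +
          ∑ ℓ ∈ Finset.Ico (dsum ω n z 1 - dsum ω n z u)
            (dsum ω n z 1 - dsum ω n z (u + 1)), rVal (cbeNum ω n z) ℓ := by
        rw [Finset.range_eq_Ico, Finset.range_eq_Ico]
        rw [Finset.sum_Ico_consecutive _ (by omega) (by omega)]
      rw [e0, P2]
      rw [Finset.sum_eq_sum_Ico_succ_bot (by omega) _]
      have e1 : ∑ ℓ ∈ Finset.Ico (dsum ω n z 1 - dsum ω n z u + 1)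
          (dsum ω n z 1 - dsum ω n z (u + 1)), rVal (cbeNum ω n z) ℓ =
          ∑ ℓ ∈ Finset.Ico (dsum ω n z 1 - dsum ω n z u + 1)
            (dsum ω n z 1 - dlv ω n z u), rVal (cbeNum ω n z) ℓ +
          ∑ ℓ ∈ Finset.Ico (dsum ω n z 1 - dlv ω n z u)
            (dsum ω n z 1 - dsum ω n z (u + 1)), rVal (cbeNum ω n z) ℓ :=
        (Finset.sum_Ico_consecutive _ (by omega) (by omega)).symm
      rw [e1]
      have e2 : ∑ ℓ ∈ Finset.Ico (dsum ω n z 1 - dsum ω n z u + 1)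
          (dsum ω n z 1 - dlv ω n z u), rVal (cbeNum ω n z) ℓ = 0 := by
        apply Finset.sum_eq_zero
        intro ℓ hℓ
        rw [Finset.mem_Ico] at hℓ
        exact zB ℓ (by omega) (by omega)
      rw [e2, Finset.sum_eq_sum_Ico_succ_bot (by omega) _, rκ, rL]
      have e3 : ∑ ℓ ∈ Finset.Ico (dsum ω n z 1 - dlv ω n z u + 1)
          (dsum ω n z 1 - dsum ω n z (u + 1)), rVal (cbeNum ω n z) ℓ = 0 := by
        apply Finset.sum_eq_zero
        intro ℓ hℓ
        rw [Finset.mem_Ico] at hℓ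
        exact zD ℓ (by omega) (by omega)
      rw [e3]
      omega
    · -- zeros
      intro ℓ hℓ hne
      have hκ := (hne u h1 h2').1
      have hL := (hne u h1 h2').2
      have hcases : ℓ < dsum ω n z 1 - dsum ω n z u ∨
          (dsum ω n z 1 - dsum ω n z u < ℓ ∧ ℓ < dsum ω n z 1 - dlv ω n z u) ∨
          (dsum ω n z 1 - dlv ω n z u < ℓ ∧ ℓ < dsum ω n z 1 - dsum ω n z (u + 1)) := by
        omega
      rcases hcases with hc | hc | hc
      · exact P3 ℓ hc hne
      · exact zB ℓ hc.1 hc.2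
      · exact zD ℓ hc.1 hc.2

end RofAux

open RofAux in
/-- Let `m` be even with `cbe(m) = (n_1, z_1, …, n_ω, z_ω)`,
`n_1 < n_2 < ⋯ < n_ω` and `n_u < z_u` for all `1 ≤ u ≤ ω`. Then in the
`r`-recursion for `m`: `r_{κ_1} = 2^{n_1} - 1`;
`r_{κ_u} = 2^{n_u} - 2^{n_{u-1}} - 1` for `2 ≤ u ≤ ω`; `r_{ℓ_u} = 1` for
`1 ≤ u ≤ ω`; and `r_ℓ = 0` for every other index `ℓ`.
Consequently `r(m) = 1 + 2^{n_ω}`. -/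
theorem rOf_spaced (ω : ℕ) (hω : 1 ≤ ω) (n z : ℕ → ℕ)
    (hn : ∀ u ∈ Finset.Icc 1 ω, 1 ≤ n u) (hz : ∀ u ∈ Finset.Icc 1 ω, 1 ≤ z u)
    (hmono : ∀ u, 1 ≤ u → u < ω → n u < n (u + 1))
    (hspace : ∀ u ∈ Finset.Icc 1 ω, n u < z u) :
    (rVal (cbeNum ω n z) (kappaIdx ω n z 1) = 2 ^ n 1 - 1) ∧
    (∀ u, 2 ≤ u → u ≤ ω →
      rVal (cbeNum ω n z) (kappaIdx ω n z u) = 2 ^ n u - 2 ^ n (u - 1) - 1) ∧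
    (∀ u, 1 ≤ u → u ≤ ω → rVal (cbeNum ω n z) (ellIdx ω n z u) = 1) ∧
    (∀ ℓ ≤ tVal (cbeNum ω n z),
      (∀ u, 1 ≤ u → u ≤ ω → ℓ ≠ kappaIdx ω n z u ∧ ℓ ≠ ellIdx ω n z u) →
      rVal (cbeNum ω n z) ℓ = 0) ∧
    rOf (cbeNum ω n z) = 1 + 2 ^ n ω := by
  have hn1 : 1 ≤ n 1 := hn 1 (Finset.mem_Icc.mpr ⟨le_rfl, hω⟩)
  have hMaster := master ω n z hω hn1 hz hn hmono hspace
  have hkap : ∀ v, 1 ≤ v → v ≤ ω + 1 →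
      kappaIdx ω n z v = dsum ω n z 1 - dsum ω n z v := by
    intro v h1 h2
    have := kappaIdx_eq ω n z h1 h2
    omega
  have hell : ∀ v, 1 ≤ v → v ≤ ω → ellIdx ω n z v = dsum ω n z 1 - dlv ω n z v := by
    intro v h1 h2
    have := ellIdx_eq ω n z h1 h2 (hspace v (Finset.mem_Icc.mpr ⟨h1, h2⟩))
    omega
  have hd1pos : 1 ≤ dsum ω n z 1 := by
    have h1 : dsum ω n z ω ≤ dsum ω n z 1 := dsum_anti ω n z hω
    have h2 := dsum_step ω n z (le_refl ω)
    have h3 : (2:ℕ) ≤ 2 ^ z ω := le_trans (by norm_num)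
      (Nat.pow_le_pow_right (by norm_num) (hz ω (Finset.mem_Icc.mpr ⟨hω, le_rfl⟩)))
    have h4 : (1:ℕ) ≤ 2 ^ tailLen ω n z (ω + 1) := Nat.one_le_two_pow
    have h5 : 1 * 1 ≤ (2 ^ z ω - 1) * 2 ^ tailLen ω n z (ω + 1) :=
      Nat.mul_le_mul (by omega) h4
    omega
  have hdend : dsum ω n z (ω + 1) = 0 := dsum_end ω n z (by omega)
  refine ⟨?_, ?_, ?_, ?_, ?_⟩
  · -- r at κ_1
    obtain ⟨rκ, -, -, -, -⟩ := blockStep ω n z hω hn1 hz hn hmono hspace le_rfl hω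
      (aV_bound ω n hn hmono le_rfl hω) (hMaster 1 le_rfl (by omega)).1
    rw [hkap 1 le_rfl (by omega)]
    rw [rκ, aV, if_pos rfl]
    omega
  · -- r at κ_u
    intro u h2u huω
    obtain ⟨rκ, -, -, -, -⟩ := blockStep ω n z hω hn1 hz hn hmono hspace (by omega) huω
      (aV_bound ω n hn hmono (by omega) huω) (hMaster u (by omega) (by omega)).1
    rw [hkap u (by omega) (by omega), rκ, aV, if_neg (by omega)]
  · -- r at ℓ_u
    intro u h1u huω
    obtain ⟨-, rL, -, -, -⟩ := blockStep ω n z hω hn1 hz hn hmono hspace h1u huω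
      (aV_bound ω n hn hmono h1u huω) (hMaster u h1u (by omega)).1
    rw [hell u h1u huω, rL]
  · -- zeros
    intro ℓ hℓ hne
    have htv : tVal (cbeNum ω n z) = dsum ω n z 1 - 1 := tVal_eq ω n z hω hn1 hz
    apply (hMaster (ω + 1) (by omega) le_rfl).2.2 ℓ (by omega)
    intro v hv1 hv2
    obtain ⟨e1, e2⟩ := hne v hv1 hv2
    rw [← hkap v hv1 (by omega), ← hell v hv1 hv2]
    exact ⟨e1, e2⟩
  · -- total
    have htv : tVal (cbeNum ω n z) = dsum ω n z 1 - 1 := tVal_eq ω n z hω hn1 hz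
    rw [rOf]
    have e1 : tVal (cbeNum ω n z) + 1 = dsum ω n z 1 - dsum ω n z (ω + 1) := by omega
    rw [e1, (hMaster (ω + 1) (by omega) le_rfl).2.1, aV, if_neg (by omega)]
    norm_num
end

section
/- Let m be even with cbe(m) = (n_1, z_1, …, n_ω, z_ω), n_1 < n_2 < ⋯ < n_ω, and n_u ≤ z_u for all 1 ≤ u ≤ ω. Let i be an integer with 0 ≤ i ≤ 2^{z_ω} - 1 and set j = (i+1)(2^{n_ω} + 1) - 2. If the binomial coefficient C(m + j, m + i) is odd and m + i + 1 is not a power of 2, then r(m + i) = 1 + 2^{n_ω}. -/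
open Finset

/- ==================== auxiliary development ==================== -/

private lemma mod_pow_succ_two (a j : ℕ) : a % 2 ^ (j + 1) = a % 2 + 2 * (a / 2 % 2 ^ j) := by
  rw [pow_succ, mul_comm (2 ^ j) 2, Nat.mod_mul]

/-- Lucas-type characterization: `(a+b).choose b` is odd iff adding `a` and `b` in
binary produces no carries. -/
private lemma choose_odd_iff_nc :
    ∀ s a b : ℕ, a + b ≤ s → ((a + b).choose b % 2 = 1 ↔ ∀ j, a % 2 ^ j + b % 2 ^ j < 2 ^ j) := by
  intro s
  induction s with
  | zero =>
    intro a b h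
    have ha : a = 0 := by omega
    have hb : b = 0 := by omega
    subst ha; subst hb
    constructor
    · intro _ j; simp
    · intro _; decide
  | succ s ih =>
    intro a b h
    rcases Nat.eq_zero_or_pos (a + b) with h0 | hpos
    · have ha : a = 0 := by omega
      have hb : b = 0 := by omega
      subst ha; subst hb
      constructor
      · intro _ j; simp
      · intro _; decide
    · haveI : Fact (Nat.Prime 2) := ⟨Nat.prime_two⟩
      have hrec := @Choose.choose_modEq_choose_mod_mul_choose_div_nat (a + b) b 2 _
      rw [Nat.ModEq] at hrec
      by_cases hboth : a % 2 = 1 ∧ b % 2 = 1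
      · -- both odd: carry at position 1, choose is even
        have h1 : (a + b) % 2 = 0 := by omega
        have hz : (a + b).choose b % 2 = 0 := by
          rw [hrec, h1, hboth.2]
          simp
        constructor
        · intro hc; omega
        · intro hnc
          exfalso
          have := hnc 1
          rw [pow_one] at this
          omega
      · have hxy : a % 2 + b % 2 ≤ 1 := by omega
        have hab2 : (a + b) % 2 = a % 2 + b % 2 := by omega
        have hdiv : (a + b) / 2 = a / 2 + b / 2 := by omega
        have hch : Nat.choose ((a + b) % 2) (b % 2) = 1 := by
          rw [hab2]
          rcases Nat.mod_two_eq_zero_or_one a with hx | hx <;>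
            rcases Nat.mod_two_eq_zero_or_one b with hy | hy <;>
              rw [hx, hy] <;> first | decide | omega
        have hih := ih (a / 2) (b / 2) (by omega)
        have hodd : (a + b).choose b % 2 = ((a + b) / 2).choose (b / 2) % 2 := by
          rw [hrec, hch, one_mul]
        rw [hodd, hdiv]
        -- now matches hih
        constructor
        · intro hc j
          cases j with
          | zero => simp [Nat.mod_one]
          | succ j =>
            have hj := hih.mp hc j
            rw [mod_pow_succ_two a j, mod_pow_succ_two b j, pow_succ]
            omega
        · intro hnc
          apply hih.mpr
          intro j
          have := hnc (j + 1)
          rw [mod_pow_succ_two a j, mod_pow_succ_two b j, pow_succ] at this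
          omega

private lemma choose_odd_iff_nc' (a b : ℕ) :
    (a + b).choose b % 2 = 1 ↔ ∀ j, a % 2 ^ j + b % 2 ^ j < 2 ^ j :=
  choose_odd_iff_nc (a + b) a b le_rfl

/- ==================== the greedy scan function ==================== -/

private def gsum (M : ℕ) : ℕ → ℕ → ℕ
  | 0, _ => 0
  | d + 1, rem =>
    if (M + (d + 1)).choose (d + 1) % 2 = 1 then
      rem / (d + 1) + gsum M d (rem % (d + 1))
    else gsum M d rem

private lemma gsum_zero (M : ℕ) : ∀ d, gsum M d 0 = 0 := by
  intro d
  induction d with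
  | zero => rfl
  | succ d ih => simp [gsum, ih]

private lemma gsum_step (M d rem : ℕ) (hd : 1 ≤ d)
    (hodd : (M + d).choose d % 2 = 1) :
    gsum M d rem = rem / d + gsum M (d - 1) (rem % d) := by
  obtain ⟨e, rfl⟩ : ∃ e, d = e + 1 := ⟨d - 1, by omega⟩
  simp [gsum, hodd]

private lemma gsum_skip (M : ℕ) : ∀ d₁ d₂ rem, d₂ ≤ d₁ →
    (∀ d', d₂ < d' → d' ≤ d₁ → (M + d').choose d' % 2 = 1 → rem < d') →
    gsum M d₁ rem = gsum M d₂ rem := by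
  intro d₁
  induction d₁ with
  | zero => intro d₂ rem h _; interval_cases d₂; rfl
  | succ d ih =>
    intro d₂ rem h hcond
    rcases Nat.eq_or_lt_of_le h with heq | hlt
    · rw [heq]
    · have hrest : gsum M d rem = gsum M d₂ rem :=
        ih d₂ rem (by omega) (fun d' h1 h2 h3 => hcond d' h1 (by omega) h3)
      by_cases hodd : (M + (d + 1)).choose (d + 1) % 2 = 1
      · have hlt' : rem < d + 1 := hcond (d + 1) (by omega) le_rfl hodd
        have h1 : rem / (d + 1) = 0 := Nat.div_eq_of_lt hlt'
        have h2 : rem % (d + 1) = rem := Nat.mod_eq_of_lt hlt'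
        simp [gsum, hodd, h1, h2, hrest]
      · simp [gsum, hodd, hrest]

/- ==================== bridge : rOf sum = gsum ==================== -/

private lemma bridge_aux (M : ℕ) (he : eVal M = 0) :
    ∀ D, D ≤ d0Val M → partialS M (d0Val M - D) ≤ M →
      (∑ ℓ ∈ Finset.Ico (d0Val M - D) (d0Val M), rVal M ℓ)
        = gsum M D (M - partialS M (d0Val M - D)) := by
  intro D
  induction D with
  | zero =>
    intro _ _
    rw [Nat.sub_zero, Finset.Ico_self, Finset.sum_empty]
    rfl
  | succ D ih =>
    intro hD hS
    set ℓ₀ := d0Val M - (D + 1) with hℓ₀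
    have hℓlt : ℓ₀ < d0Val M := by omega
    have hd : dVal M ℓ₀ = D + 1 := by
      simp only [dVal, he, pow_zero, one_mul]
      omega
    have hsucc : d0Val M - D = ℓ₀ + 1 := by omega
    rw [Finset.sum_eq_sum_Ico_succ_bot hℓlt]
    set S := partialS M ℓ₀ with hSdef
    have hpS : partialS M (ℓ₀ + 1) = S + (D + 1) * rStep M ℓ₀ S := by
      rw [partialS, hd]
    have hrv : rVal M ℓ₀ = rStep M ℓ₀ S := rfl
    by_cases hodd : (M + (D + 1)).choose (D + 1) % 2 = 1
    · have hstep : rStep M ℓ₀ S = (M - S) / (D + 1) := by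
        rw [rStep, hd, he]
        simp [hodd]
      have hq : (D + 1) * ((M - S) / (D + 1)) ≤ M - S := Nat.mul_div_le _ _
      have hS' : partialS M (ℓ₀ + 1) ≤ M := by
        rw [hpS, hstep]; omega
      have hrem : M - partialS M (ℓ₀ + 1) = (M - S) % (D + 1) := by
        rw [hpS, hstep]
        have := Nat.mod_add_div (M - S) (D + 1)
        omega
      have hih := ih (by omega) (by rw [hsucc]; exact hS')
      rw [hsucc] at hih
      rw [hih, hrem, hrv, hstep]
      rw [gsum]
      simp only [hodd, if_true]
    · have hstep : rStep M ℓ₀ S = 0 := by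
        rw [rStep, hd]
        simp [hodd]
      have hpS' : partialS M (ℓ₀ + 1) = S := by rw [hpS, hstep]; ring
      have hih := ih (by omega) (by rw [hsucc, hpS']; exact hS)
      rw [hsucc, hpS'] at hih
      rw [hih, hrv, hstep, gsum]
      simp only [hodd, if_false]
      omega

private lemma bridge (M : ℕ) (he : eVal M = 0) (hd0 : 1 ≤ d0Val M) :
    (∑ ℓ ∈ Finset.range (tVal M + 1), rVal M ℓ) = gsum M (d0Val M) M := by
  have ht : tVal M + 1 = d0Val M := by
    rw [tVal, he, pow_zero, Nat.div_one]
    omega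
  have := bridge_aux M he (d0Val M) le_rfl (by rw [Nat.sub_self]; exact Nat.zero_le M)
  rw [Nat.sub_self] at this
  rw [ht, Finset.range_eq_Ico, this]
  rfl

/- ==================== no-carry facts for complements ==================== -/

private lemma compl_mod {X J j : ℕ} (hj : j ≤ J) (hX : X < 2 ^ J) :
    (2 ^ J - 1 - X) % 2 ^ j = 2 ^ j - 1 - X % 2 ^ j := by
  have h2j : (0:ℕ) < 2 ^ j := by positivity
  have hdm := Nat.div_add_mod X (2 ^ j)
  have hrlt : X % 2 ^ j < 2 ^ j := Nat.mod_lt _ h2j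
  have hpow : 2 ^ j * 2 ^ (J - j) = 2 ^ J := by rw [← pow_add]; congr 1; omega
  have hq : X / 2 ^ j < 2 ^ (J - j) := Nat.div_lt_of_lt_mul (by rw [hpow]; exact hX)
  have key : 2 ^ J - 1 - X = 2 ^ j * (2 ^ (J - j) - 1 - X / 2 ^ j) + (2 ^ j - 1 - X % 2 ^ j) := by
    have hsum : (2 ^ (J - j) - 1 - X / 2 ^ j) + X / 2 ^ j + 1 = 2 ^ (J - j) := by omega
    have hB : 2 ^ j * (2 ^ (J - j) - 1 - X / 2 ^ j) + 2 ^ j * (X / 2 ^ j) + 2 ^ j = 2 ^ J := by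
      calc 2 ^ j * (2 ^ (J - j) - 1 - X / 2 ^ j) + 2 ^ j * (X / 2 ^ j) + 2 ^ j
          = 2 ^ j * ((2 ^ (J - j) - 1 - X / 2 ^ j) + X / 2 ^ j + 1) := by ring
        _ = 2 ^ j * 2 ^ (J - j) := by rw [hsum]
        _ = 2 ^ J := hpow
    omega
  rw [key, Nat.mul_add_mod, Nat.mod_eq_of_lt (by omega)]

private lemma nc_compl (M J : ℕ) :
    ∀ j, M % 2 ^ j + (2 ^ J - 1 - M % 2 ^ J) % 2 ^ j < 2 ^ j := by
  intro j
  have h2j : (0:ℕ) < 2 ^ j := by positivity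
  have h2J : (0:ℕ) < 2 ^ J := by positivity
  have hXJ : M % 2 ^ J < 2 ^ J := Nat.mod_lt _ h2J
  rcases le_or_gt j J with hj | hj
  · rw [compl_mod hj hXJ]
    have : M % 2 ^ j = (M % 2 ^ J) % 2 ^ j := by
      rw [Nat.mod_mod_of_dvd]
      exact pow_dvd_pow 2 hj
    rw [this]
    have : (M % 2 ^ J) % 2 ^ j < 2 ^ j := Nat.mod_lt _ h2j
    omega
  · -- j > J
    have hd : 2 ^ J - 1 - M % 2 ^ J < 2 ^ j := by
      have : 2 ^ J ≤ 2 ^ j := Nat.pow_le_pow_right (by norm_num) (by omega)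
      omega
    rw [Nat.mod_eq_of_lt hd]
    have hmm : (M % 2 ^ j) % 2 ^ J = M % 2 ^ J := by
      rw [Nat.mod_mod_of_dvd]
      exact pow_dvd_pow 2 (by omega)
    have hdm := Nat.mod_add_div (M % 2 ^ j) (2 ^ J)
    set q := (M % 2 ^ j) / 2 ^ J with hq
    have hql : q < 2 ^ (j - J) := by
      rw [hq]
      apply Nat.div_lt_of_lt_mul
      have : 2 ^ J * 2 ^ (j - J) = 2 ^ j := by rw [← pow_add]; congr 1; omega
      rw [this]
      exact Nat.mod_lt _ h2j
    have hmul : 2 ^ J * (q + 1) ≤ 2 ^ j := by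
      have : 2 ^ J * (q + 1) ≤ 2 ^ J * 2 ^ (j - J) := Nat.mul_le_mul_left _ (by omega)
      have he : 2 ^ J * 2 ^ (j - J) = 2 ^ j := by rw [← pow_add]; congr 1; omega
      omega
    have : M % 2 ^ j = 2 ^ J * q + M % 2 ^ J := by omega
    rw [this]
    have : 2 ^ J * (q + 1) = 2 ^ J * q + 2 ^ J := by ring
    omega

section Main

variable (ω : ℕ) (n z : ℕ → ℕ) (i : ℕ)

private def Kf (u : ℕ) : ℕ := tailLen ω n z u

private def Muf (u : ℕ) : ℕ :=
  (∑ v ∈ Finset.Icc u ω, (2 ^ n v - 1) * 2 ^ (z v + tailLen ω n z (v + 1))) + i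

private def Cuf (u : ℕ) : ℕ := 2 ^ Kf ω n z u - 1 - Muf ω n z i u

private lemma Icc_peel {u : ℕ} (h : u ≤ ω) :
    Finset.Icc u ω = insert u (Finset.Icc (u + 1) ω) := by
  rw [Finset.Icc_add_one_left_eq_Ioc, Finset.Ioc_insert_left h]

private lemma Kf_top : Kf ω n z (ω + 1) = 0 := by
  unfold Kf tailLen
  rw [Finset.Icc_eq_empty (by omega), Finset.sum_empty]

private lemma Kf_rec {u : ℕ} (h : u ≤ ω) :
    Kf ω n z u = n u + z u + Kf ω n z (u + 1) := by
  unfold Kf tailLen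
  rw [Icc_peel ω h, Finset.sum_insert (by simp)]

private lemma Muf_top : Muf ω n z i (ω + 1) = i := by
  unfold Muf
  rw [Finset.Icc_eq_empty (by omega), Finset.sum_empty, zero_add]

private lemma Muf_rec {u : ℕ} (h : u ≤ ω) :
    Muf ω n z i u
      = (2 ^ n u - 1) * 2 ^ (z u + Kf ω n z (u + 1)) + Muf ω n z i (u + 1) := by
  unfold Muf Kf
  rw [Icc_peel ω h, Finset.sum_insert (by simp)]
  ring

private lemma Muf_ge {u : ℕ} (h : u ≤ ω) :
    (2 ^ n u - 1) * 2 ^ (z u + Kf ω n z (u + 1)) ≤ Muf ω n z i u := by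
  rw [Muf_rec ω n z i h]; omega

private lemma Muf_lt (hi : i < 2 ^ z ω) :
    ∀ t u, u + t = ω → Muf ω n z i u < 2 ^ Kf ω n z u := by
  intro t
  induction t with
  | zero =>
    intro u hu
    have hu' : u = ω := by omega
    rw [hu']
    rw [Muf_rec ω n z i le_rfl, Muf_top, Kf_rec ω n z le_rfl, Kf_top]
    have h1 : 2 ^ (z ω + 0) = 2 ^ z ω := by norm_num
    rw [h1]
    have h2 : 2 ^ (n ω + z ω + 0) = 2 ^ n ω * 2 ^ z ω := by
      rw [add_zero, pow_add]
    rw [h2]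
    have h3 : (2 ^ n ω - 1) * 2 ^ z ω + 2 ^ z ω = 2 ^ n ω * 2 ^ z ω := by
      have h4 : (2 ^ n ω - 1) + 1 = 2 ^ n ω := by
        have : (1:ℕ) ≤ 2 ^ n ω := Nat.one_le_two_pow
        omega
      calc (2 ^ n ω - 1) * 2 ^ z ω + 2 ^ z ω = ((2 ^ n ω - 1) + 1) * 2 ^ z ω := by ring
        _ = 2 ^ n ω * 2 ^ z ω := by rw [h4]
    omega
  | succ t ih =>
    intro u hu
    have huω : u ≤ ω := by omega
    have hih := ih (u + 1) (by omega)
    rw [Muf_rec ω n z i huω, Kf_rec ω n z huω]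
    set Y := 2 ^ (z u + Kf ω n z (u + 1)) with hY
    have hYge : 2 ^ Kf ω n z (u + 1) ≤ Y := Nat.pow_le_pow_right (by norm_num) (by omega)
    have hKY : 2 ^ (n u + z u + Kf ω n z (u + 1)) = 2 ^ n u * Y := by
      rw [hY, ← pow_add]; congr 1; omega
    rw [hKY]
    have h3 : (2 ^ n u - 1) * Y + Y = 2 ^ n u * Y := by
      have h1 : (1:ℕ) ≤ 2 ^ n u := Nat.one_le_two_pow
      calc (2 ^ n u - 1) * Y + Y = ((2 ^ n u - 1) + 1) * Y := by ring
        _ = 2 ^ n u * Y := by rw [show (2 ^ n u - 1) + 1 = 2 ^ n u by omega]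
    omega

private lemma M_mod (hi : i < 2 ^ z ω) :
    ∀ u, 1 ≤ u → u ≤ ω → Muf ω n z i 1 % 2 ^ Kf ω n z u = Muf ω n z i u := by
  intro u hu1 huω
  induction u with
  | zero => omega
  | succ u ih =>
    rcases Nat.eq_zero_or_pos u with hu0 | hup
    · -- u + 1 = 1
      subst hu0
      exact Nat.mod_eq_of_lt (Muf_lt ω n z i hi (ω - 1) 1 (by omega))
    · have hih := ih hup (by omega)
      have hdvd : (2:ℕ) ^ Kf ω n z (u + 1) ∣ 2 ^ Kf ω n z u := by
        apply pow_dvd_pow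
        rw [Kf_rec ω n z (by omega : u ≤ ω)]
        omega
      have h1 : Muf ω n z i 1 % 2 ^ Kf ω n z (u + 1)
          = Muf ω n z i u % 2 ^ Kf ω n z (u + 1) := by
        rw [← hih, Nat.mod_mod_of_dvd _ hdvd]
      rw [h1, Muf_rec ω n z i (by omega : u ≤ ω)]
      have hsplit : 2 ^ (z u + Kf ω n z (u + 1))
          = 2 ^ z u * 2 ^ Kf ω n z (u + 1) := pow_add 2 _ _
      rw [hsplit, ← mul_assoc, Nat.mul_add_mod']
      apply Nat.mod_eq_of_lt
      exact Muf_lt ω n z i hi (ω - (u + 1)) (u + 1) (by omega)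

private lemma Muf_succ_lt (hi : i < 2 ^ z ω) {u : ℕ} (hu1 : 1 ≤ u) (huω : u ≤ ω) :
    Muf ω n z i (u + 1) < 2 ^ (z u + Kf ω n z (u + 1)) := by
  rcases Nat.eq_or_lt_of_le huω with heq | hlt
  · rw [heq, Muf_top, Kf_top]
    simpa using hi
  · calc Muf ω n z i (u + 1) < 2 ^ Kf ω n z (u + 1) :=
          Muf_lt ω n z i hi (ω - (u + 1)) (u + 1) (by omega)
      _ ≤ 2 ^ (z u + Kf ω n z (u + 1)) := Nat.pow_le_pow_right (by norm_num) (by omega)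

private lemma M_modZ (hi : i < 2 ^ z ω) {u : ℕ} (hu1 : 1 ≤ u) (huω : u ≤ ω) :
    Muf ω n z i 1 % 2 ^ (z u + Kf ω n z (u + 1)) = Muf ω n z i (u + 1) := by
  have hdvd : (2:ℕ) ^ (z u + Kf ω n z (u + 1)) ∣ 2 ^ Kf ω n z u := by
    apply pow_dvd_pow
    rw [Kf_rec ω n z huω]
    omega
  rw [← Nat.mod_mod_of_dvd _ hdvd, M_mod ω n z i hi u hu1 huω,
    Muf_rec ω n z i huω, Nat.mul_add_mod']
  exact Nat.mod_eq_of_lt (Muf_succ_lt ω n z i hi hu1 huω)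

private lemma M_modN (hi : i < 2 ^ z ω) {u : ℕ} (hu1 : 1 ≤ u) (huω : u < ω)
    (hsp : n u ≤ z u) :
    Muf ω n z i 1 % 2 ^ (n u + Kf ω n z (u + 1)) = Muf ω n z i (u + 1) := by
  have hdvd : (2:ℕ) ^ (n u + Kf ω n z (u + 1)) ∣ 2 ^ (z u + Kf ω n z (u + 1)) := by
    apply pow_dvd_pow
    omega
  rw [← Nat.mod_mod_of_dvd _ hdvd, M_modZ ω n z i hi hu1 (by omega)]
  apply Nat.mod_eq_of_lt
  calc Muf ω n z i (u + 1) < 2 ^ Kf ω n z (u + 1) :=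
        Muf_lt ω n z i hi (ω - (u + 1)) (u + 1) (by omega)
    _ ≤ 2 ^ (n u + Kf ω n z (u + 1)) := Nat.pow_le_pow_right (by norm_num) (by omega)

private lemma n_mono (hmono : ∀ u, 1 ≤ u → u < ω → n u < n (u + 1)) :
    ∀ u v, 1 ≤ u → u ≤ v → v ≤ ω → n u ≤ n v := by
  intro u v hu huv
  induction v with
  | zero => omega
  | succ v ih =>
    intro hvω
    rcases Nat.eq_or_lt_of_le huv with heq | hlt
    · rw [heq]
    · have h1 := ih (by omega) (by omega)
      have h2 := hmono v (by omega) (by omega)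
      omega

private lemma Cuf_eq (hi : i < 2 ^ z ω) {u : ℕ} (hu1 : 1 ≤ u) (huω : u ≤ ω) :
    Muf ω n z i u + Cuf ω n z i u + 1 = 2 ^ Kf ω n z u := by
  have := Muf_lt ω n z i hi (ω - u) u (by omega)
  unfold Cuf
  omega

private lemma odd_Cu (hi : i < 2 ^ z ω) {u : ℕ} (hu1 : 1 ≤ u) (huω : u ≤ ω)
    {M : ℕ} (hM : M = Muf ω n z i 1) :
    (M + Cuf ω n z i u).choose (Cuf ω n z i u) % 2 = 1 := by
  rw [choose_odd_iff_nc']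
  have hCu : Cuf ω n z i u = 2 ^ Kf ω n z u - 1 - M % 2 ^ Kf ω n z u := by
    rw [hM, M_mod ω n z i hi u hu1 huω]; rfl
  rw [hCu]
  exact nc_compl M (Kf ω n z u)

private lemma odd_E (hi : i < 2 ^ z ω) {u : ℕ} (hu1 : 1 ≤ u) (huω : u < ω)
    (hsp : n u ≤ z u) {M E : ℕ} (hM : M = Muf ω n z i 1)
    (hE : E = (2 ^ n u - 1) * 2 ^ Kf ω n z (u + 1) + Cuf ω n z i (u + 1)) :
    (M + E).choose E % 2 = 1 := by
  rw [choose_odd_iff_nc']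
  set J := n u + Kf ω n z (u + 1) with hJ
  have hmod : M % 2 ^ J = Muf ω n z i (u + 1) := by
    rw [hM]; exact M_modN ω n z i hi hu1 huω hsp
  have hCu' : Muf ω n z i (u + 1) + Cuf ω n z i (u + 1) + 1 = 2 ^ Kf ω n z (u + 1) :=
    Cuf_eq ω n z i hi (by omega) (by omega)
  have hpow : 2 ^ J = 2 ^ n u * 2 ^ Kf ω n z (u + 1) := pow_add 2 _ _
  have hsub : (2 ^ n u - 1) * 2 ^ Kf ω n z (u + 1) + 2 ^ Kf ω n z (u + 1)
      = 2 ^ n u * 2 ^ Kf ω n z (u + 1) := by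
    have h1 : (1:ℕ) ≤ 2 ^ n u := Nat.one_le_two_pow
    calc (2 ^ n u - 1) * 2 ^ Kf ω n z (u + 1) + 2 ^ Kf ω n z (u + 1)
        = ((2 ^ n u - 1) + 1) * 2 ^ Kf ω n z (u + 1) := by ring
      _ = 2 ^ n u * 2 ^ Kf ω n z (u + 1) := by rw [show (2 ^ n u - 1) + 1 = 2 ^ n u by omega]
  have hEeq : E = 2 ^ J - 1 - M % 2 ^ J := by
    rw [hmod, hE, hpow]
    omega
  rw [hEeq]
  exact nc_compl M J

private lemma key_ineq (hi : i < 2 ^ z ω) (hn : ∀ u, 1 ≤ u → u ≤ ω → 1 ≤ n u)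
    (hmono : ∀ u, 1 ≤ u → u < ω → n u < n (u + 1))
    {u : ℕ} (hu1 : 1 ≤ u) (huω : u < ω) :
    (2 ^ n u + 1) * Cuf ω n z i (u + 1) < 2 ^ Kf ω n z (u + 1) := by
  set Y := 2 ^ (z (u + 1) + Kf ω n z (u + 1 + 1)) with hY
  have hge : (2 ^ n (u + 1) - 1) * Y ≤ Muf ω n z i (u + 1) :=
    Muf_ge ω n z i (by omega)
  have hCu' : Muf ω n z i (u + 1) + Cuf ω n z i (u + 1) + 1 = 2 ^ Kf ω n z (u + 1) :=
    Cuf_eq ω n z i hi (by omega) (by omega)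
  have hpow : 2 ^ Kf ω n z (u + 1) = 2 ^ n (u + 1) * Y := by
    rw [hY, ← pow_add, Kf_rec ω n z (by omega : u + 1 ≤ ω)]
    congr 1
    omega
  have h1 : (1:ℕ) ≤ 2 ^ n (u + 1) := Nat.one_le_two_pow
  have hsub : (2 ^ n (u + 1) - 1) * Y + Y = 2 ^ n (u + 1) * Y := by
    calc (2 ^ n (u + 1) - 1) * Y + Y = ((2 ^ n (u + 1) - 1) + 1) * Y := by ring
      _ = 2 ^ n (u + 1) * Y := by rw [show (2 ^ n (u + 1) - 1) + 1 = 2 ^ n (u + 1) by omega]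
  -- C' ≤ Y - 1
  have hYpos : 1 ≤ Y := Nat.one_le_two_pow
  have h2 : (2 ^ n (u + 1) - 1) * Y + Y = 2 ^ Kf ω n z (u + 1) := by
    rw [hsub]; exact hpow.symm
  have hC'le : Cuf ω n z i (u + 1) + 1 ≤ Y := by omega
  -- (2^{n u} + 1) ≤ 2^{n u + 1} ≤ 2^{n (u+1)}
  have ha1 : 2 ^ n u + 1 ≤ 2 ^ (n u + 1) := by
    have : (1:ℕ) ≤ 2 ^ n u := Nat.one_le_two_pow
    rw [pow_succ]
    omega
  have ha2 : (2:ℕ) ^ (n u + 1) ≤ 2 ^ n (u + 1) :=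
    Nat.pow_le_pow_right (by norm_num) (hmono u hu1 huω)
  calc (2 ^ n u + 1) * Cuf ω n z i (u + 1)
      ≤ 2 ^ n (u + 1) * Cuf ω n z i (u + 1) := Nat.mul_le_mul_right _ (by omega)
    _ ≤ 2 ^ n (u + 1) * (Y - 1) := Nat.mul_le_mul_left _ (by omega)
    _ = 2 ^ n (u + 1) * Y - 2 ^ n (u + 1) := by rw [Nat.mul_sub, mul_one]
    _ < 2 ^ n (u + 1) * Y := by
        have : 2 ^ n (u + 1) * 1 ≤ 2 ^ n (u + 1) * Y := Nat.mul_le_mul_left _ hYpos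
        omega
    _ = 2 ^ Kf ω n z (u + 1) := hpow.symm

private lemma divmod_helper {C q r : ℕ} (h : r < C) :
    (C * q + r) / C = q ∧ (C * q + r) % C = r := by
  have hC : 0 < C := by omega
  constructor
  · rw [Nat.mul_add_div hC, Nat.div_eq_of_lt h, add_zero]
  · rw [Nat.mul_add_mod, Nat.mod_eq_of_lt h]

private lemma phase (hω : 1 ≤ ω) (hn : ∀ u, 1 ≤ u → u ≤ ω → 1 ≤ n u)
    (hz : ∀ u, 1 ≤ u → u ≤ ω → 1 ≤ z u)
    (hmono : ∀ u, 1 ≤ u → u < ω → n u < n (u + 1))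
    (hspace : ∀ u, 1 ≤ u → u ≤ ω → n u ≤ z u)
    (hi : i < 2 ^ z ω)
    {M F : ℕ} (hM : M = Muf ω n z i 1) (hF : F = i * 2 ^ n ω + (2 ^ n ω - 1))
    (hoddF : (M + F).choose F % 2 = 1)
    (hFC : F ≤ Cuf ω n z i ω) :
    ∀ t u, u + t = ω → 1 ≤ u → ∀ b R, b < 2 ^ n u →
      Muf ω n z i u = b * Cuf ω n z i u + R →
      gsum M (Cuf ω n z i u) R = 2 ^ n ω - b := by
  intro t
  induction t with
  | zero =>
    intro u hu hu1 b R hb hbR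
    have huω : u = ω := by omega
    rw [huω] at hb hbR ⊢
    clear hu hu1 huω
    set P := 2 ^ n ω with hP
    set Q := 2 ^ z ω with hQ
    set C := Cuf ω n z i ω with hC
    have hP2 : 2 ≤ P := by
      rw [hP]
      calc (2:ℕ) = 2 ^ 1 := (pow_one 2).symm
        _ ≤ 2 ^ n ω := Nat.pow_le_pow_right (by norm_num) (hn ω (by omega) le_rfl)
    have hQ2 : 2 ≤ Q := by
      rw [hQ]
      calc (2:ℕ) = 2 ^ 1 := (pow_one 2).symm
        _ ≤ 2 ^ z ω := Nat.pow_le_pow_right (by norm_num) (hz ω (by omega) le_rfl)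
    have hMω : Muf ω n z i ω = (P - 1) * Q + i := by
      rw [Muf_rec ω n z i le_rfl, Muf_top, Kf_top, add_zero]
    have hKω : 2 ^ Kf ω n z ω = P * Q := by
      rw [Kf_rec ω n z le_rfl, Kf_top, add_zero, pow_add]
    have hCeq : Muf ω n z i ω + C + 1 = P * Q := by
      rw [← hKω]
      exact Cuf_eq ω n z i hi (by omega) le_rfl
    have hPQ : (P - 1) * Q + Q = P * Q := by
      calc (P - 1) * Q + Q = ((P - 1) + 1) * Q := by ring
        _ = P * Q := by rw [show (P - 1) + 1 = P by omega]
    -- C = Q - 1 - i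
    have hCval : C + i + 1 = Q := by omega
    -- identity Muf ω = (P-1)*C + F
    have hPC : (P - 1) * C + C = P * C := by
      calc (P - 1) * C + C = ((P - 1) + 1) * C := by ring
        _ = P * C := by rw [show (P - 1) + 1 = P by omega]
    have hCP : P * C + P * i + P = P * Q := by
      calc P * C + P * i + P = P * (C + i + 1) := by ring
        _ = P * Q := by rw [hCval]
    have hcomm : i * P = P * i := mul_comm _ _
    have hFid : Muf ω n z i ω = (P - 1) * C + F := by omega
    have hbP : b ≤ P - 1 := by omega
    have hbsplit : (P - 1 - b) * C + b * C = (P - 1) * C := by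
      rw [← Nat.add_mul]
      congr 1
      omega
    have hcomm2 : C * (P - 1 - b) = (P - 1 - b) * C := mul_comm _ _
    have hFpos : 1 ≤ F := by omega
    rcases Nat.eq_or_lt_of_le hFC with hFeq | hFlt
    · -- F = C : single step
      have hCC : C * (P - 1 - b) + C = C * (P - b) := by
        rw [← Nat.mul_succ]
        congr 1
        omega
      have hR : R = C * (P - b) + 0 := by omega
      have hdm := divmod_helper (C := C) (q := P - b) (r := 0) (by omega)
      rw [gsum_step M C R (by omega) (odd_Cu ω n z i hi (by omega) le_rfl hM), hR,
        hdm.1, hdm.2, gsum_zero]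
      omega
    · -- F < C : two steps
      have hR : R = C * (P - 1 - b) + F := by omega
      have hdm := divmod_helper (q := P - 1 - b) hFlt
      rw [gsum_step M C R (by omega) (odd_Cu ω n z i hi (by omega) le_rfl hM), hR,
        hdm.1, hdm.2]
      have hskip : gsum M (C - 1) F = gsum M F F := by
        apply gsum_skip M (C - 1) F F (by omega)
        intro d' h1 _ _
        omega
      rw [hskip, gsum_step M F F (by omega) hoddF, Nat.div_self (by omega),
        Nat.mod_self, gsum_zero]
      omega
  | succ t ih =>
    intro u hu hu1 b R hb hbR
    have huω : u < ω := by omega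
    set a := 2 ^ n u with ha
    set W := 2 ^ Kf ω n z (u + 1) with hW
    set Zv := 2 ^ z u with hZv
    set C := Cuf ω n z i u with hC
    set C' := Cuf ω n z i (u + 1) with hC'
    set M' := Muf ω n z i (u + 1) with hM'
    set E := (a - 1) * W + C' with hE
    set R' := W - 1 - (a + 1) * C' with hR'
    have ha2 : 2 ≤ a := by
      rw [ha]
      calc (2:ℕ) = 2 ^ 1 := (pow_one 2).symm
        _ ≤ 2 ^ n u := Nat.pow_le_pow_right (by norm_num) (hn u (by omega) (by omega))
    have hZ2 : 2 ≤ Zv := by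
      rw [hZv]
      calc (2:ℕ) = 2 ^ 1 := (pow_one 2).symm
        _ ≤ 2 ^ z u := Nat.pow_le_pow_right (by norm_num) (hz u (by omega) (by omega))
    have hW1 : 1 ≤ W := Nat.one_le_two_pow
    have haZ : a ≤ Zv := Nat.pow_le_pow_right (by norm_num) (hspace u (by omega) (by omega))
    have hK : 2 ^ Kf ω n z u = a * (Zv * W) := by
      rw [Kf_rec ω n z (by omega : u ≤ ω), pow_add, pow_add, mul_assoc]
    have hrec : Muf ω n z i u = (a - 1) * (Zv * W) + M' := by
      rw [Muf_rec ω n z i (by omega : u ≤ ω)]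
      congr 2
      rw [pow_add]
    have hCeq : Muf ω n z i u + C + 1 = a * (Zv * W) := by
      rw [← hK]
      exact Cuf_eq ω n z i hi (by omega) (by omega)
    have hCu' : M' + C' + 1 = W :=
      Cuf_eq ω n z i hi (by omega) (by omega)
    have hkey : (a + 1) * C' < W := key_ineq ω n z i hi hn hmono (by omega) huω
    -- linear links
    have l1 : (a - 1) * (Zv * W) + Zv * W = a * (Zv * W) := by
      calc (a - 1) * (Zv * W) + Zv * W = ((a - 1) + 1) * (Zv * W) := by ring
        _ = a * (Zv * W) := by rw [show (a - 1) + 1 = a by omega]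
    have hCval : C + W = Zv * W + C' := by omega
    have l3 : a * M' + a * C' + a = a * W := by
      calc a * M' + a * C' + a = a * (M' + C' + 1) := by ring
        _ = a * W := by rw [hCu']
    have l4 : (a + 1) * C' = a * C' + C' := by ring
    have l5 : a * C + a * W = a * (Zv * W) + a * C' := by
      calc a * C + a * W = a * (C + W) := by ring
        _ = a * (Zv * W + C') := by rw [hCval]
        _ = a * (Zv * W) + a * C' := by ring
    have l6 : (a - 1) * C + C = a * C := by
      calc (a - 1) * C + C = ((a - 1) + 1) * C := by ring
        _ = a * C := by rw [show (a - 1) + 1 = a by omega]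
    have l7 : (a - 1) * W + W = a * W := by
      calc (a - 1) * W + W = ((a - 1) + 1) * W := by ring
        _ = a * W := by rw [show (a - 1) + 1 = a by omega]
    have l8 : 2 * W ≤ a * W := Nat.mul_le_mul_right _ ha2
    have l9 : 2 * W ≤ Zv * W := Nat.mul_le_mul_right _ hZ2
    have l10 : a * W ≤ Zv * W := Nat.mul_le_mul_right _ haZ
    have hMA : Muf ω n z i u = (a - 1) * C + (a * M' + (a - 1)) := by omega
    have hbsplit : (a - 1 - b) * C + b * C = (a - 1) * C := by
      rw [← Nat.add_mul]
      congr 1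
      omega
    have hM'R : M' = a * C' + R' := by omega
    have hC1 : 1 ≤ C := by omega
    have hihyp : a < 2 ^ n (u + 1) := by
      rw [ha]
      exact Nat.pow_lt_pow_right (by norm_num) (hmono u (by omega) huω)
    have hIH := ih (u + 1) (by omega) (by omega) a R' hihyp hM'R
    have haP : a ≤ 2 ^ n ω := by
      rw [ha]
      exact Nat.pow_le_pow_right (by norm_num) (n_mono ω n hmono u ω (by omega) (by omega) le_rfl)
    -- skip-condition helper : any admissible d' has d' % W ≤ C'
    have hskipb : ∀ d', (M + d').choose d' % 2 = 1 → d' % W ≤ C' := by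
      intro d' hd'
      have hnc := (choose_odd_iff_nc' M d').mp hd' (Kf ω n z (u + 1))
      rw [← hW] at hnc
      have hmod : M % W = M' := by
        rw [hM, hW, hM']
        exact M_mod ω n z i hi (u + 1) (by omega) (by omega)
      have hd'W : d' % W ≤ d' % W := le_rfl
      omega
    have hdge : ∀ d', E < d' → (M + d').choose d' % 2 = 1 → a * W ≤ d' := by
      intro d' h1 h3
      have hs := hskipb d' h3
      have hdm := Nat.div_add_mod d' W
      by_contra hcon
      push_neg at hcon
      have hq : d' / W ≤ a - 1 := by
        by_contra hq'
        push_neg at hq'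
        have : a ≤ d' / W := by omega
        have : W * a ≤ W * (d' / W) := Nat.mul_le_mul_left _ this
        have hcm : W * a = a * W := mul_comm _ _
        omega
      have : W * (d' / W) ≤ W * (a - 1) := Nat.mul_le_mul_left _ hq
      have hcm2 : W * (a - 1) = (a - 1) * W := mul_comm _ _
      omega
    have hdgeW : ∀ d', C' < d' → (M + d').choose d' % 2 = 1 → W ≤ d' := by
      intro d' h1 h3
      have hs := hskipb d' h3
      rcases Nat.lt_or_ge d' W with hlt | hge
      · rw [Nat.mod_eq_of_lt hlt] at hs
        omega
      · exact hge
    rcases Nat.eq_or_lt_of_le haZ with haZeq | haZlt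
    · -- a = Zv : single step then recurse
      have hX : a * W = Zv * W := by rw [haZeq]
      have l12 : (a - 1 - b) * C + C = (a - b) * C := by
        calc (a - 1 - b) * C + C = ((a - 1 - b) + 1) * C := by ring
          _ = (a - b) * C := by rw [show (a - 1 - b) + 1 = a - b by omega]
      have hc4 : C * (a - b) = (a - b) * C := mul_comm _ _
      have hR'C : R' < C := by omega
      have hR2 : R = C * (a - b) + R' := by omega
      have hdm := divmod_helper (q := a - b) hR'C
      rw [gsum_step M C R (by omega) (odd_Cu ω n z i hi (by omega) (by omega) hM), hR2,
        hdm.1, hdm.2]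
      have hskip : gsum M (C - 1) R' = gsum M C' R' := by
        apply gsum_skip M (C - 1) C' R' (by omega)
        intro d' h1 h2 h3
        have := hdgeW d' (by omega) h3
        omega
      rw [hskip, hIH]
      omega
    · -- a < Zv : two steps then recurse
      have l11 : (a + 1) * W ≤ Zv * W := Nat.mul_le_mul_right _ (by omega)
      have l11' : (a + 1) * W = a * W + W := by ring
      have hAC : a * M' + (a - 1) < C := by omega
      have hcomm2 : C * (a - 1 - b) = (a - 1 - b) * C := mul_comm _ _
      have hR : R = C * (a - 1 - b) + (a * M' + (a - 1)) := by omega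
      have hdm := divmod_helper (q := a - 1 - b) hAC
      rw [gsum_step M C R (by omega) (odd_Cu ω n z i hi (by omega) (by omega) hM), hR,
        hdm.1, hdm.2]
      have hEC : E ≤ C - 1 := by omega
      have hskip1 : gsum M (C - 1) (a * M' + (a - 1)) = gsum M E (a * M' + (a - 1)) := by
        apply gsum_skip M (C - 1) E _ (by omega)
        intro d' h1 h2 h3
        have := hdge d' (by omega) h3
        omega
      have hAE : a * M' + (a - 1) = E * 1 + R' := by
        rw [mul_one]
        omega
      have hR'E : R' < E := by omega
      have hdm2 := divmod_helper (q := 1) hR'E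
      rw [hskip1, gsum_step M E _ (by omega)
        (odd_E ω n z i hi (by omega) huω (hspace u (by omega) (by omega)) hM hE), hAE,
        hdm2.1, hdm2.2]
      have hskip2 : gsum M (E - 1) R' = gsum M C' R' := by
        apply gsum_skip M (E - 1) C' R' (by omega)
        intro d' h1 h2 h3
        have := hdgeW d' (by omega) h3
        omega
      rw [hskip2, hIH]
      omega

end Main

/-- Let `m` be even with `cbe(m) = (n_1, z_1, …, n_ω, z_ω)`,
`n_1 < ⋯ < n_ω`, `n_u ≤ z_u`. Let `0 ≤ i ≤ 2^{z_ω} - 1` and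
`j = (i+1)(2^{n_ω} + 1) - 2`. If `C(m + j, m + i)` is odd and `m + i + 1` is not
a power of `2`, then `r(m + i) = 1 + 2^{n_ω}`. -/
theorem rOf_perturbed (ω : ℕ) (hω : 1 ≤ ω) (n z : ℕ → ℕ)
    (hn : ∀ u ∈ Finset.Icc 1 ω, 1 ≤ n u) (hz : ∀ u ∈ Finset.Icc 1 ω, 1 ≤ z u)
    (hmono : ∀ u, 1 ≤ u → u < ω → n u < n (u + 1))
    (hspace : ∀ u ∈ Finset.Icc 1 ω, n u ≤ z u)
    (i : ℕ) (hi : i ≤ 2 ^ z ω - 1)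
    (hodd : (cbeNum ω n z + ((i + 1) * (2 ^ n ω + 1) - 2)).choose (cbeNum ω n z + i) % 2 = 1)
    (hpow : ¬ ∃ k, cbeNum ω n z + i + 1 = 2 ^ k) :
    rOf (cbeNum ω n z + i) = 1 + 2 ^ n ω := by

  have hn' : ∀ u, 1 ≤ u → u ≤ ω → 1 ≤ n u := fun u h1 h2 => hn u (Finset.mem_Icc.mpr ⟨h1, h2⟩)
  have hz' : ∀ u, 1 ≤ u → u ≤ ω → 1 ≤ z u := fun u h1 h2 => hz u (Finset.mem_Icc.mpr ⟨h1, h2⟩)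
  have hsp' : ∀ u, 1 ≤ u → u ≤ ω → n u ≤ z u :=
    fun u h1 h2 => hspace u (Finset.mem_Icc.mpr ⟨h1, h2⟩)
  set M := cbeNum ω n z + i with hMdef
  set P := 2 ^ n ω with hP
  set Q := 2 ^ z ω with hQ
  have hP2 : 2 ≤ P := by
    rw [hP]
    calc (2:ℕ) = 2 ^ 1 := (pow_one 2).symm
      _ ≤ 2 ^ n ω := Nat.pow_le_pow_right (by norm_num) (hn' ω (by omega) le_rfl)
  have hQ2 : 2 ≤ Q := by
    rw [hQ]
    calc (2:ℕ) = 2 ^ 1 := (pow_one 2).symm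
      _ ≤ 2 ^ z ω := Nat.pow_le_pow_right (by norm_num) (hz' ω (by omega) le_rfl)
  have hiQ : i < Q := by omega
  have hM1 : Muf ω n z i 1 = M := rfl
  set F := i * P + (P - 1) with hF
  -- rewrite the binomial hypothesis
  have hexp : (i + 1) * (P + 1) = i * P + i + P + 1 := by ring
  have hbig : cbeNum ω n z + ((i + 1) * (P + 1) - 2) = F + M := by
    rw [hMdef, hF]
    omega
  rw [hbig] at hodd
  have hNCFM := (choose_odd_iff_nc' F M).mp hodd
  have hNC : ∀ j, M % 2 ^ j + F % 2 ^ j < 2 ^ j := by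
    intro j
    have := hNCFM j
    omega
  have hoddF : (M + F).choose F % 2 = 1 := by
    rw [choose_odd_iff_nc']
    intro j
    have := hNC j
    omega
  -- M mod 2^{z ω} = i
  have hKtop : Kf ω n z (ω + 1) = 0 := Kf_top ω n z
  have hMmodz : M % 2 ^ z ω = i := by
    have := M_modZ ω n z i hiQ (u := ω) (by omega) le_rfl
    rw [hKtop, add_zero, Muf_top, hM1] at this
    exact this
  -- i is divisible by 2^{n ω}
  have hFmodP : F % P = P - 1 := by
    rw [hF, Nat.mul_add_mod', Nat.mod_eq_of_lt (by omega)]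
  have hMmodP : M % P = i % P := by
    have hdvd : (P:ℕ) ∣ Q := by
      rw [hP, hQ]
      exact pow_dvd_pow 2 (hsp' ω (by omega) le_rfl)
    rw [← hMmodz, Nat.mod_mod_of_dvd _ hdvd]
  have hiP : i % P = 0 := by
    have := hNC (n ω)
    rw [← hP, hFmodP, hMmodP] at this
    have hlt : i % P < P := Nat.mod_lt _ (by omega)
    omega
  have hieven : 2 ∣ i := by
    have h1 : P ∣ i := Nat.dvd_of_mod_eq_zero hiP
    have h2 : (2:ℕ) ∣ P := by
      rw [hP]
      exact dvd_pow_self 2 (by have := hn' ω (by omega) le_rfl; omega)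
    exact dvd_trans h2 h1
  -- F ≤ Cuf ω
  have hKω : 2 ^ Kf ω n z ω = P * Q := by
    rw [Kf_rec ω n z le_rfl, Kf_top, add_zero, pow_add]
  have hCuω : Muf ω n z i ω + Cuf ω n z i ω + 1 = P * Q := by
    rw [← hKω]
    exact Cuf_eq ω n z i hiQ (by omega) le_rfl
  have hMω : Muf ω n z i ω = (P - 1) * Q + i := by
    rw [Muf_rec ω n z i le_rfl, Muf_top, Kf_top, add_zero]
  have hPQl : (P - 1) * Q + Q = P * Q := by
    calc (P - 1) * Q + Q = ((P - 1) + 1) * Q := by ring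
      _ = P * Q := by rw [show (P - 1) + 1 = P by omega]
  have hiPQ : i * P + P ≤ Q * P := by
    have : (i + 1) * P ≤ Q * P := Nat.mul_le_mul_right _ (by omega)
    calc i * P + P = (i + 1) * P := by ring
      _ ≤ Q * P := this
  have hFlt : F < 2 ^ Kf ω n z ω := by
    rw [hKω]
    have : P * Q = Q * P := mul_comm _ _
    omega
  have hMmodK : M % 2 ^ Kf ω n z ω = Muf ω n z i ω := by
    rw [← hM1]
    exact M_mod ω n z i hiQ ω (by omega) le_rfl
  have hFC : F ≤ Cuf ω n z i ω := by
    have := hNC (Kf ω n z ω)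
    rw [hMmodK, Nat.mod_eq_of_lt hFlt, hKω] at this
    have hcm : P * Q = Q * P := mul_comm _ _
    omega
  -- M is even, so eVal M = 0
  have hMeven : 2 ∣ M := by
    rw [hMdef]
    apply Nat.dvd_add
    · apply Finset.dvd_sum
      intro v hv
      apply Dvd.dvd.mul_left
      apply dvd_pow_self 2
      have := hz' v (Finset.mem_Icc.mp hv).1 (Finset.mem_Icc.mp hv).2
      omega
    · exact hieven
  have he : eVal M = 0 := by
    apply padicValNat.eq_zero_of_not_dvd
    omega
  -- size of M
  have hMlt : M < 2 ^ Kf ω n z 1 := by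
    rw [← hM1]
    exact Muf_lt ω n z i hiQ (ω - 1) 1 (by omega)
  have hK1 : Kf ω n z 1 = n 1 + z 1 + Kf ω n z (1 + 1) := Kf_rec ω n z hω
  have hn1 : 1 ≤ n 1 := hn' 1 le_rfl hω
  have hMge : 2 ^ (Kf ω n z 1 - 1) ≤ M := by
    have h1 : 2 ^ (Kf ω n z 1 - 1) = 2 ^ (n 1 - 1) * 2 ^ (z 1 + Kf ω n z (1 + 1)) := by
      rw [← pow_add]
      congr 1
      omega
    have h2 : 2 ^ n 1 = 2 * 2 ^ (n 1 - 1) := by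
      rw [← pow_succ']
      congr 1
      omega
    have h3 : (2:ℕ) ^ (n 1 - 1) ≤ 2 ^ n 1 - 1 := by omega
    calc 2 ^ (Kf ω n z 1 - 1) = 2 ^ (n 1 - 1) * 2 ^ (z 1 + Kf ω n z (1 + 1)) := h1
      _ ≤ (2 ^ n 1 - 1) * 2 ^ (z 1 + Kf ω n z (1 + 1)) := Nat.mul_le_mul_right _ h3
      _ ≤ Muf ω n z i 1 := Muf_ge ω n z i hω
      _ = M := hM1
  have hsize : Nat.size M = Kf ω n z 1 := by
    apply le_antisymm
    · exact Nat.size_le.mpr hMlt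
    · have h4 : Kf ω n z 1 - 1 < Nat.size M := Nat.lt_size.mpr hMge
      omega
  have hd0 : d0Val M = Cuf ω n z i 1 := by
    rw [d0Val, hsize]
    unfold Cuf
    rw [hM1]
    omega
  have hK11 : 1 ≤ Kf ω n z 1 := by
    have := hz' 1 le_rfl hω
    omega
  have h2K1 : 2 ^ Kf ω n z 1 = 2 * 2 ^ (Kf ω n z 1 - 1) := by
    rw [← pow_succ']
    congr 1
    omega
  have hd0pos : 1 ≤ d0Val M := by
    rw [hd0]
    unfold Cuf
    rw [hM1]
    omega
  -- final computation
  have hphase := phase ω n z i hω hn' hz' hmono hsp' hiQ hM1.symm hF hoddF hFC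
    (ω - 1) 1 (by omega) le_rfl 0 M (by positivity)
    (by rw [zero_mul, zero_add, hM1])
  rw [rOf, bridge M he hd0pos, hd0, hphase]
  omega
end

section
/- Let m be even with cbe(m) = (n, z) (i.e. m = (2^n - 1)·2^z) and n > z. Let σ be the largest integer that is strictly smaller than n/z. Then r(m) = 1 + Σ_{i=0}^{σ} 2^{n - i·z}. Explicitly, the only nonzero values in the r-recursion for m occur at the indices ℓ_1 and ℓ_2 determined by d_{ℓ_1} = 2^z - 1 and d_{ℓ_2} = 2^{n - σz} - 1, with r_{ℓ_1} = Σ_{i=0}^{σ} 2^{n - i·z} - 1 and r_{ℓ_2} = 1 (when z divides n the two indices coincide and the single merged value is r_{ℓ_1} = r_{ℓ_2} = Σ_{i=0}^{σ} 2^{n - i·z}). -/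
open Finset

lemma odd_choose_aux : ∀ z c d : ℕ, d < 2 ^ z → (c * 2 ^ z + d).choose d % 2 = 1 := by
  intro z
  induction z with
  | zero =>
    intro c d hd
    interval_cases d
    simp
  | succ z ih =>
    intro c d hd
    have key := Choose.choose_modEq_choose_mod_mul_choose_div_nat
      (n := c * 2 ^ (z + 1) + d) (k := d) (p := 2)
    rw [Nat.ModEq] at key
    have e1 : (c * 2 ^ (z + 1) + d) % 2 = d % 2 := by
      rw [pow_succ, ← mul_assoc, mul_comm (c * 2 ^ z) 2, Nat.mul_add_mod]
    have e2 : (c * 2 ^ (z + 1) + d) / 2 = c * 2 ^ z + d / 2 := by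
      rw [pow_succ, ← mul_assoc, mul_comm (c * 2 ^ z) 2, Nat.mul_add_div two_pos]
    rw [e1, e2, Nat.choose_self, one_mul] at key
    have hih := ih c (d / 2) (by omega)
    omega

lemma sum_geo_mul (n z : ℕ) :
    ∀ s, s * z + 1 ≤ n →
      (∑ i ∈ Finset.range (s + 1), 2 ^ (n - i * z)) * (2 ^ z - 1)
        = 2 ^ (n + z) - 2 ^ (n - s * z) := by
  intro s
  induction s with
  | zero =>
    intro _
    rw [Finset.sum_range_one]
    simp only [Nat.zero_mul, Nat.sub_zero]
    have h1 : 2 ^ n * 2 ^ z = 2 ^ (n + z) := (pow_add 2 n z).symm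
    rw [Nat.mul_sub, mul_one, h1]
  | succ s ih =>
    intro hs
    have hmono : s * z ≤ (s + 1) * z := Nat.mul_le_mul_right z (Nat.le_succ s)
    have hs' : s * z + 1 ≤ n := by omega
    have hszz : (s + 1) * z = s * z + z := Nat.succ_mul s z
    have e1 : 2 ^ (n - (s + 1) * z) * (2 ^ z - 1)
        = 2 ^ (n - s * z) - 2 ^ (n - (s + 1) * z) := by
      rw [Nat.mul_sub, mul_one, ← pow_add]
      congr 2
      omega
    have hle1 : 2 ^ (n - s * z) ≤ 2 ^ (n + z) := Nat.pow_le_pow_right two_pos (by omega)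
    have hle2 : 2 ^ (n - (s + 1) * z) ≤ 2 ^ (n - s * z) := Nat.pow_le_pow_right two_pos (by omega)
    rw [Finset.sum_range_succ, Nat.add_mul, ih hs', e1]
    omega

/-- Let `m = 1^n 0^z` (i.e. `m = (2^n - 1)·2^z`) with `n > z ≥ 1`
and let `σ` be the largest integer strictly smaller than `n/z` (i.e. `σ = (n-1)/z`).
Then `r(m) = 1 + Σ_{i=0}^{σ} 2^{n-iz}`, and the only nonzero values in the
`r`-recursion occur at the indices `ℓ_1, ℓ_2` determined by `d_{ℓ_1} = 2^z - 1`
and `d_{ℓ_2} = 2^{n-σz} - 1` (note `d_ℓ = d_0 - ℓ` since `m` is even), with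
`r_{ℓ_1} = Σ_{i=0}^{σ} 2^{n-iz} - 1` and `r_{ℓ_2} = 1`; when `z ∣ n` the two
indices coincide and the values merge additively into `Σ_{i=0}^{σ} 2^{n-iz}`. -/
theorem rOf_one_block (n z m σ A : ℕ) (hz : 1 ≤ z) (hnz : z < n)
    (hm : m = (2 ^ n - 1) * 2 ^ z) (hσ : σ = (n - 1) / z)
    (hA : A = ∑ i ∈ Finset.range (σ + 1), 2 ^ (n - i * z)) :
    rOf m = 1 + A ∧
    ∀ ℓ ≤ tVal m,
      rVal m ℓ =
        (if ℓ = d0Val m - (2 ^ z - 1) then A - 1 else 0) +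
        (if ℓ = d0Val m - (2 ^ (n - σ * z) - 1) then 1 else 0) := by
  -- σ and ρ := n - σ*z facts
  have h1 : z * σ + (n - 1) % z = n - 1 := by rw [hσ]; exact Nat.div_add_mod _ _
  have h2 : (n - 1) % z < z := Nat.mod_lt _ (by omega)
  have h3 : z * σ = σ * z := Nat.mul_comm z σ
  have hσ1 : σ * z + 1 ≤ n := by omega
  have hρ1 : 1 ≤ n - σ * z := by omega
  have hρz : n - σ * z ≤ z := by omega
  -- raw pow facts
  have h2z : 2 ≤ 2 ^ z := by
    calc (2:ℕ) = 2 ^ 1 := (pow_one 2).symm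
    _ ≤ 2 ^ z := Nat.pow_le_pow_right two_pos hz
  have hpρz : 2 ^ (n - σ * z) ≤ 2 ^ z := Nat.pow_le_pow_right two_pos hρz
  have hpρ2 : 2 ≤ 2 ^ (n - σ * z) := by
    calc (2:ℕ) = 2 ^ 1 := (pow_one 2).symm
    _ ≤ 2 ^ (n - σ * z) := Nat.pow_le_pow_right two_pos hρ1
  have hX2 : 2 * 2 ^ z ≤ 2 ^ (n + z) := by
    calc 2 * 2 ^ z = 2 ^ (z + 1) := by rw [pow_succ]; ring
    _ ≤ 2 ^ (n + z) := Nat.pow_le_pow_right two_pos (by omega)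
  -- m facts
  have hm' : m = 2 ^ (n + z) - 2 ^ z := by rw [hm, Nat.sub_mul, one_mul, ← pow_add]
  have hm2 : 2 ∣ m := by
    rw [hm]; exact Dvd.dvd.mul_left (dvd_pow_self 2 (by omega)) _
  have he : eVal m = 0 := padicValNat.eq_zero_of_not_dvd (by omega)
  -- size
  have hsize : Nat.size m = n + z := by
    have hszlt : m < 2 ^ (n + z) := by omega
    have hszge : 2 ^ (n + z - 1) ≤ m := by
      have i1 : 2 ^ z ≤ 2 ^ (n + z - 1) := Nat.pow_le_pow_right two_pos (by omega)
      have i2 : 2 ^ (n + z) = 2 ^ (n + z - 1) * 2 := by rw [← pow_succ]; congr 1; omega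
      omega
    have a1 : Nat.size m ≤ n + z := Nat.size_le.2 hszlt
    have a2 : n + z - 1 < Nat.size m := Nat.lt_size.2 hszge
    omega
  -- basic quantities (raw form)
  have hd0 : d0Val m = 2 ^ z - 1 := by unfold d0Val; rw [hsize]; omega
  have hdv : ∀ ℓ, dVal m ℓ = 2 ^ z - 1 - ℓ := by
    intro ℓ; unfold dVal; rw [he, pow_zero, one_mul, hd0]
  have ht : tVal m = 2 ^ z - 2 := by
    unfold tVal; rw [he, pow_zero, Nat.div_one, hd0]; omega
  -- all binomial coefficients are odd
  have hodd : ∀ ℓ, (m + dVal m ℓ).choose (dVal m ℓ) % 2 = 1 := by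
    intro ℓ
    rw [hdv ℓ, hm]
    exact odd_choose_aux z (2 ^ n - 1) _ (by omega)
  have hstep : ∀ ℓ S, rStep m ℓ S = (m - S) / (2 ^ z - 1 - ℓ) := by
    intro ℓ S
    unfold rStep
    rw [if_pos (hodd ℓ), he, pow_zero, hdv ℓ]
    norm_num
  -- A facts
  have hAm : A * (2 ^ z - 1) = 2 ^ (n + z) - 2 ^ (n - σ * z) := by
    rw [hA]; exact sum_geo_mul n z σ hσ1
  have hA1 : 1 ≤ A := by
    rw [hA]
    calc 1 ≤ 2 ^ (n - 0 * z) := Nat.one_le_two_pow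
    _ ≤ ∑ i ∈ Finset.range (σ + 1), 2 ^ (n - i * z) :=
      Finset.single_le_sum (f := fun i => 2 ^ (n - i * z))
        (fun i _ => Nat.zero_le _) (Finset.mem_range.2 (Nat.succ_pos σ))
  -- abstract the three power quantities
  obtain ⟨X, hX⟩ : ∃ X, 2 ^ (n + z) = X := ⟨_, rfl⟩
  obtain ⟨Y, hY⟩ : ∃ Y, 2 ^ z = Y := ⟨_, rfl⟩
  obtain ⟨R, hR⟩ : ∃ R, 2 ^ (n - σ * z) = R := ⟨_, rfl⟩
  rw [hX] at hX2 hm' hAm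
  rw [hY] at h2z hpρz hX2 hm' hAm hd0 hdv ht hstep ⊢
  rw [hR] at hpρz hpρ2 hAm ⊢
  obtain ⟨AW, hAW⟩ : ∃ w, A * (Y - 1) = w := ⟨_, rfl⟩
  rw [hAW] at hAm
  have hW : (A - 1) * (Y - 1) = X - R - (Y - 1) := by
    rw [Nat.sub_mul, one_mul, hAW, hAm]
  obtain ⟨W, hW2⟩ : ∃ w, (A - 1) * (Y - 1) = w := ⟨_, rfl⟩
  rw [hW2] at hW
  have hAWW : AW = W + (Y - 1) := by omega
  -- value of r₀
  have hr0 : m / (Y - 1) = A - 1 + (if Y - R = 0 then 1 else 0) := by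
    by_cases hLz : Y - R = 0
    · have hmA : m = (Y - 1) * A := by rw [mul_comm (Y - 1) A, hAW]; omega
      rw [hmA, Nat.mul_div_cancel_left A (by omega), if_pos hLz]
      omega
    · have hmW : m = (Y - 1) * (A - 1) + (R - 1) := by
        rw [mul_comm (Y - 1) (A - 1), hW2]; omega
      rw [hmW, Nat.mul_add_div (by omega), Nat.div_eq_of_lt (by omega), if_neg hLz]
  -- closed form of partialS
  have hps : ∀ ℓ, partialS m ℓ =
      if ℓ = 0 then 0 else if ℓ ≤ Y - R then m - (R - 1) else m := by
    intro ℓ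
    induction ℓ with
    | zero => simp [partialS]
    | succ ℓ ih =>
      simp only [partialS]
      rw [hstep, hdv, ih]
      rcases Nat.eq_zero_or_pos ℓ with h0 | h0
      · subst h0
        rw [if_pos rfl, Nat.sub_zero, Nat.sub_zero, Nat.zero_add, hr0]
        by_cases hLz : Y - R = 0
        · rw [if_pos hLz, show A - 1 + 1 = A from by omega, mul_comm (Y - 1) A, hAW,
            if_neg (show ¬(0 + 1 = 0) from by omega),
            if_neg (show ¬(0 + 1 ≤ Y - R) from by omega)]
          omega
        · rw [if_neg hLz, Nat.add_zero, mul_comm (Y - 1) (A - 1), hW2,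
            if_neg (show ¬(0 + 1 = 0) from by omega),
            if_pos (show 0 + 1 ≤ Y - R from by omega)]
          omega
      · rw [if_neg (by omega : ¬ ℓ = 0)]
        rcases Nat.lt_trichotomy ℓ (Y - R) with hc | hc | hc
        · rw [if_pos (by omega : ℓ ≤ Y - R),
            show m - (m - (R - 1)) = R - 1 from by omega,
            Nat.div_eq_of_lt (by omega), Nat.mul_zero, Nat.add_zero,
            if_neg (show ¬(ℓ + 1 = 0) from by omega),
            if_pos (show ℓ + 1 ≤ Y - R from by omega)]
        · rw [if_pos (by omega : ℓ ≤ Y - R),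
            show m - (m - (R - 1)) = R - 1 from by omega,
            show Y - 1 - ℓ = R - 1 from by omega,
            Nat.div_self (by omega), Nat.mul_one,
            if_neg (show ¬(ℓ + 1 = 0) from by omega),
            if_neg (show ¬(ℓ + 1 ≤ Y - R) from by omega)]
          omega
        · rw [if_neg (by omega : ¬ ℓ ≤ Y - R), Nat.sub_self,
            Nat.zero_div, Nat.mul_zero, Nat.add_zero,
            if_neg (show ¬(ℓ + 1 = 0) from by omega),
            if_neg (show ¬(ℓ + 1 ≤ Y - R) from by omega)]
  -- closed form of rVal
  have hrv : ∀ ℓ, rVal m ℓ =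
      (if ℓ = 0 then A - 1 else 0) + (if ℓ = Y - R then 1 else 0) := by
    intro ℓ
    unfold rVal
    rw [hstep, hps]
    rcases Nat.eq_zero_or_pos ℓ with h0 | h0
    · subst h0
      rw [if_pos rfl, Nat.sub_zero, Nat.sub_zero, hr0,
        if_pos (rfl : (0:ℕ) = 0)]
      by_cases hLz : Y - R = 0
      · rw [if_pos hLz, if_pos (show (0:ℕ) = Y - R from by omega)]
      · rw [if_neg hLz, if_neg (show ¬((0:ℕ) = Y - R) from by omega)]
    · rw [if_neg (by omega : ¬ ℓ = 0)]
      rcases Nat.lt_trichotomy ℓ (Y - R) with hc | hc | hc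
      · rw [if_pos (by omega : ℓ ≤ Y - R),
          show m - (m - (R - 1)) = R - 1 from by omega,
          Nat.div_eq_of_lt (by omega),
          if_neg (by omega : ¬ ℓ = 0), if_neg (by omega : ¬ ℓ = Y - R)]
      · rw [if_pos (by omega : ℓ ≤ Y - R),
          show m - (m - (R - 1)) = R - 1 from by omega,
          show Y - 1 - ℓ = R - 1 from by omega,
          Nat.div_self (by omega),
          if_neg (by omega : ¬ ℓ = 0), if_pos hc]
      · rw [if_neg (by omega : ¬ ℓ ≤ Y - R), Nat.sub_self, Nat.zero_div,
          if_neg (by omega : ¬ ℓ = 0), if_neg (by omega : ¬ ℓ = Y - R)]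
  constructor
  · unfold rOf
    have hsum : ∑ ℓ ∈ Finset.range (tVal m + 1), rVal m ℓ = A := by
      rw [Finset.sum_congr rfl (fun ℓ _ => hrv ℓ), Finset.sum_add_distrib,
        Finset.sum_ite_eq' (Finset.range (tVal m + 1)) 0 (fun _ => A - 1),
        Finset.sum_ite_eq' (Finset.range (tVal m + 1)) (Y - R) (fun _ => 1),
        if_pos (Finset.mem_range.2 (by omega)), if_pos (Finset.mem_range.2 (by omega))]
      omega
    rw [hsum]
  · intro ℓ _
    have c1 : d0Val m - (Y - 1) = 0 := by omega
    have c2 : d0Val m - (R - 1) = Y - R := by omega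
    rw [c1, c2]
    exact hrv ℓ
end

section
/- Let m be even with cbe(m) = (n_1, z_1, n_2, z_2) and n_2 ≤ n_1 ≤ min{z_1, z_2}. Then r(m) = 1 + 2^{n_1}. Explicitly, the only nonzero values in the r-recursion for m occur at the indices κ_1 and ℓ_1 determined by d_{κ_1} = 1^{z_1}0^{n_2}1^{z_2} and d_{ℓ_1} = 1^{n_2}0^{z_2}1^{n_1}, with r_{κ_1} = 2^{n_1} - 1 and r_{ℓ_1} = 1. -/
open Finset

private lemma lucas_step (n k : ℕ) :
    n.choose k % 2 = (Nat.choose (n % 2) (k % 2) * Nat.choose (n / 2) (k / 2)) % 2 := by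
  haveI : Fact (Nat.Prime 2) := ⟨Nat.prime_two⟩
  exact Choose.choose_modEq_choose_mod_mul_choose_div_nat

private lemma choose_pow_pred (K : ℕ) : ∀ j, j < 2 ^ K → (2 ^ K - 1).choose j % 2 = 1 := by
  induction K with
  | zero => intro j hj; interval_cases j; simp
  | succ K ih =>
    intro j hj
    have hp : 1 ≤ 2 ^ K := Nat.one_le_two_pow
    have hpe : 2 ^ (K + 1) = 2 * 2 ^ K := by ring
    rw [lucas_step]
    have h1 : (2 ^ (K + 1) - 1) % 2 = 1 := by omega
    have h2 : (2 ^ (K + 1) - 1) / 2 = 2 ^ K - 1 := by omega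
    have h3 : j / 2 < 2 ^ K := by omega
    rw [h1, h2, Nat.mul_mod, ih _ h3]
    have hj2 : j % 2 = 0 ∨ j % 2 = 1 := by omega
    rcases hj2 with h | h <;> simp [h]

private lemma choose_odd_of_digits : ∀ N a b, a + b ≤ N →
    (∀ i, a / 2 ^ i % 2 + b / 2 ^ i % 2 ≤ 1) → (a + b).choose b % 2 = 1 := by
  intro N
  induction N with
  | zero => intro a b hab _; have ha : a = 0 := by omega
            have hb : b = 0 := by omega
            subst ha; subst hb; simp
  | succ N ih =>
    intro a b hab h
    rw [lucas_step]
    have h0 := h 0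
    simp only [pow_zero, Nat.div_one] at h0
    have hmod : (a + b) % 2 = a % 2 + b % 2 := by omega
    have hdiv : (a + b) / 2 = a / 2 + b / 2 := by omega
    have hrec : (a / 2 + b / 2).choose (b / 2) % 2 = 1 := by
      apply ih
      · omega
      · intro i
        have := h (i + 1)
        have e : ∀ c : ℕ, c / 2 / 2 ^ i = c / 2 ^ (i + 1) := by
          intro c
          rw [Nat.div_div_eq_div_mul, ← pow_succ']
        rw [e, e]
        exact this
    rw [hmod, hdiv, Nat.mul_mod, hrec]
    have hch : Nat.choose (a % 2 + b % 2) (b % 2) = 1 := by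
      have hb2 : b % 2 = 0 ∨ (b % 2 = 1 ∧ a % 2 = 0) := by omega
      rcases hb2 with hb2 | ⟨hb2, ha2⟩ <;> simp [*]
    rw [hch]

private lemma digit_two_pow_sub_one (n i : ℕ) :
    (2 ^ n - 1) / 2 ^ i % 2 = if i < n then 1 else 0 := by
  split
  · rename_i hin
    have h1 : (2:ℕ) ^ n = 2 ^ (n - i) * 2 ^ i := by rw [← pow_add]; congr 1; omega
    have hpi : 1 ≤ (2:ℕ) ^ i := Nat.one_le_two_pow
    have hpn : 1 ≤ (2:ℕ) ^ (n - i) := Nat.one_le_two_pow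
    have hle : (2:ℕ) ^ i ≤ 2 ^ n := by
      calc (2:ℕ) ^ i ≤ 2 ^ (n - i) * 2 ^ i := Nat.le_mul_of_pos_left _ (by omega)
      _ = 2 ^ n := h1.symm
    have h2 : 2 ^ n - 1 = (2 ^ (n - i) - 1) * 2 ^ i + (2 ^ i - 1) := by
      rw [Nat.sub_mul, ← h1]; omega
    rw [h2, mul_comm, Nat.mul_add_div (by positivity : 0 < 2 ^ i),
      Nat.div_eq_of_lt (by omega : 2 ^ i - 1 < 2 ^ i), Nat.add_zero]
    have h3 : (2:ℕ) ^ (n - i) = 2 * 2 ^ (n - i - 1) := by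
      rw [← pow_succ']; congr 1; omega
    omega
  · rename_i hin
    have hle : (2:ℕ) ^ n ≤ 2 ^ i := Nat.pow_le_pow_right (by norm_num) (by omega)
    have hpn : 1 ≤ (2:ℕ) ^ n := Nat.one_le_two_pow
    rw [Nat.div_eq_of_lt (by omega : 2 ^ n - 1 < 2 ^ i)]

private lemma digit_split (x y s i : ℕ) (hy : y < 2 ^ s) :
    (x * 2 ^ s + y) / 2 ^ i % 2 = if i < s then y / 2 ^ i % 2 else x / 2 ^ (i - s) % 2 := by
  split
  · rename_i his
    have h1 : x * 2 ^ s = x * 2 ^ (s - i - 1) * 2 * 2 ^ i := by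
      rw [mul_assoc, mul_assoc, ← pow_succ', ← pow_add]
      congr 2
      omega
    rw [h1, Nat.add_comm, Nat.add_mul_div_right _ _ (by positivity : 0 < 2 ^ i),
      Nat.add_mul_mod_self_right]
  · rename_i his
    have h1 : (2:ℕ) ^ i = 2 ^ s * 2 ^ (i - s) := by rw [← pow_add]; congr 1; omega
    rw [h1, ← Nat.div_div_eq_div_mul, Nat.add_comm,
      Nat.add_mul_div_right _ _ (by positivity : 0 < 2 ^ s),
      Nat.div_eq_of_lt hy, Nat.zero_add]

private lemma digit_block (c z j : ℕ) :
    (2 ^ c - 1) * 2 ^ z / 2 ^ j % 2 = if z ≤ j ∧ j < z + c then 1 else 0 := by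
  have h := digit_split (2 ^ c - 1) 0 z j (by positivity)
  rw [Nat.add_zero] at h
  rw [h, digit_two_pow_sub_one]
  split_ifs <;> first | rfl | omega | simp

private lemma key_ineq_s12 (a b c d : ℤ) (h1 : 1 ≤ c) (h2 : c ≤ a) (h3 : a ≤ b) (h4 : a ≤ d) :
    (c - 1) * (d * a) + (a - 1) ≤ (b - 1) * (c * d) + (d - 1) := by
  nlinarith [mul_nonneg (by linarith : (0:ℤ) ≤ a - c) (by linarith : (0:ℤ) ≤ d - 1),
    mul_nonneg (mul_nonneg (by linarith : (0:ℤ) ≤ b - a) (by linarith : (0:ℤ) ≤ c)) (by linarith : (0:ℤ) ≤ d)]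

/-- Let `m = 1^{n₁}0^{z₁}1^{n₂}0^{z₂}` with
`n₂ ≤ n₁ ≤ min{z₁, z₂}`. Then `r(m) = 1 + 2^{n₁}`, and the only nonzero values
in the `r`-recursion occur at the indices `κ₁, ℓ₁` determined by
`d_{κ₁} = 1^{z₁}0^{n₂}1^{z₂}` and `d_{ℓ₁} = 1^{n₂}0^{z₂}1^{n₁}`, with
`r_{κ₁} = 2^{n₁} - 1` and `r_{ℓ₁} = 1` (coinciding indices merging additively). -/
theorem rOf_two_blocks_small (n₁ z₁ n₂ z₂ m : ℕ)
    (hn₂ : 1 ≤ n₂) (h₁ : n₂ ≤ n₁) (h₂ : n₁ ≤ z₁) (h₃ : n₁ ≤ z₂)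
    (hm : m = (2 ^ n₁ - 1) * 2 ^ (z₁ + n₂ + z₂) + (2 ^ n₂ - 1) * 2 ^ z₂) :
    rOf m = 1 + 2 ^ n₁ ∧
    ∀ ℓ ≤ tVal m,
      rVal m ℓ =
        (if ℓ = d0Val m - ((2 ^ z₁ - 1) * 2 ^ (n₂ + z₂) + (2 ^ z₂ - 1)) then 2 ^ n₁ - 1 else 0) +
        (if ℓ = d0Val m - ((2 ^ n₂ - 1) * 2 ^ (z₂ + n₁) + (2 ^ n₁ - 1)) then 1 else 0) := by
  have P : ∀ x : ℕ, 1 ≤ (2:ℕ) ^ x := fun x => Nat.one_le_two_pow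
  have pa := P n₁; have pb := P z₁; have pc := P n₂; have pd := P z₂
  set k := n₁ + z₁ + n₂ + z₂ with hk
  set D0 := (2 ^ z₁ - 1) * 2 ^ (n₂ + z₂) + (2 ^ z₂ - 1) with hD0
  set D := (2 ^ n₂ - 1) * 2 ^ (z₂ + n₁) + (2 ^ n₁ - 1) with hD
  have e1 : (2:ℕ) ^ (z₁ + n₂ + z₂) = 2 ^ z₁ * (2 ^ n₂ * 2 ^ z₂) := by
    rw [pow_add, pow_add, mul_assoc]
  have e2 : (2:ℕ) ^ (n₂ + z₂) = 2 ^ n₂ * 2 ^ z₂ := by rw [pow_add]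
  have e3 : (2:ℕ) ^ (z₂ + n₁) = 2 ^ z₂ * 2 ^ n₁ := by rw [pow_add]
  have ek : (2:ℕ) ^ k = 2 ^ n₁ * (2 ^ z₁ * (2 ^ n₂ * 2 ^ z₂)) := by
    rw [hk, pow_add, pow_add, pow_add, mul_assoc, mul_assoc]
  have ha1 : (2:ℕ) ≤ 2 ^ n₁ := by
    calc (2:ℕ) = 2 ^ 1 := rfl
    _ ≤ 2 ^ n₁ := Nat.pow_le_pow_right (by norm_num) (by omega)
  have hF1 : m + D0 + 1 = 2 ^ k := by
    rw [hm, hD0, ek, e1, e2]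
    zify [pa, pb, pc, pd]
    ring
  have hDpos : 1 ≤ D := by rw [hD]; omega
  have hDD0 : D ≤ D0 := by
    have key := key_ineq_s12 ((2:ℤ) ^ n₁) ((2:ℤ) ^ z₁) ((2:ℤ) ^ n₂) ((2:ℤ) ^ z₂)
      (one_le_pow₀ (by norm_num)) (pow_le_pow_right₀ (by norm_num) h₁)
      (pow_le_pow_right₀ (by norm_num) h₂) (pow_le_pow_right₀ (by norm_num) h₃)
    rw [hD, hD0, e2, e3]
    zify [pa, pb, pc, pd]
    linarith [key]
  have hm2 : m = D0 * (2 ^ n₁ - 1) + D := by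
    rw [hm, hD0, hD, e1, e2, e3]
    zify [pa, pb, pc, pd]
    ring
  have hdvd : 2 ∣ m := by
    rw [hm]
    exact dvd_add (Dvd.dvd.mul_left (dvd_pow_self 2 (by omega)) _)
      (Dvd.dvd.mul_left (dvd_pow_self 2 (by omega)) _)
  have he : eVal m = 0 := by
    simp only [eVal]
    exact padicValNat.eq_zero_of_not_dvd (by omega)
  have hsize : Nat.size m = k := by
    have hub : m < 2 ^ k := by omega
    have hlb : 2 ^ (k - 1) ≤ m := by
      have h5 : (2:ℕ) ^ (k - 1) = 2 ^ (n₁ - 1) * 2 ^ (z₁ + n₂ + z₂) := by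
        rw [← pow_add]; congr 1; omega
      have h6 : (2:ℕ) ^ n₁ = 2 * 2 ^ (n₁ - 1) := by rw [← pow_succ']; congr 1; omega
      have h7 : 2 ^ (n₁ - 1) * 2 ^ (z₁ + n₂ + z₂) ≤ (2 ^ n₁ - 1) * 2 ^ (z₁ + n₂ + z₂) :=
        Nat.mul_le_mul_right _ (by omega)
      rw [hm]; omega
    have h8 : Nat.size m ≤ k := Nat.size_le.mpr hub
    have h9 : k - 1 < Nat.size m := Nat.lt_size.mpr hlb
    omega
  have hd0 : d0Val m = D0 := by simp only [d0Val, hsize]; omega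
  have hdval : ∀ ℓ, dVal m ℓ = D0 - ℓ := by
    intro ℓ; simp only [dVal, he, hd0, pow_zero, one_mul]
  have ht : tVal m = D0 - 1 := by
    simp only [tVal, he, hd0, pow_zero, Nat.div_one]
  set L := D0 - D with hL
  have hdL : dVal m L = D := by rw [hdval]; omega
  -- parity facts
  have parity0 : (m + D0).choose D0 % 2 = 1 := by
    rw [show m + D0 = 2 ^ k - 1 by omega]
    exact choose_pow_pred k D0 (by omega)
  have hdigm : ∀ i, m / 2 ^ i % 2 + D / 2 ^ i % 2 ≤ 1 := by
    intro i
    have hm3 : m = ((2 ^ n₁ - 1) * 2 ^ z₁) * 2 ^ (n₂ + z₂) + (2 ^ n₂ - 1) * 2 ^ z₂ := by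
      rw [hm, e1]; ring
    have hy : (2 ^ n₂ - 1) * 2 ^ z₂ < 2 ^ (n₂ + z₂) := by
      rw [e2]
      exact Nat.mul_lt_mul_of_lt_of_le (by omega) le_rfl (by positivity)
    have hy2 : (2:ℕ) ^ n₁ - 1 < 2 ^ (z₂ + n₁) := by
      have : (2:ℕ) ^ n₁ ≤ 2 ^ (z₂ + n₁) := Nat.pow_le_pow_right (by norm_num) (by omega)
      omega
    have hdm := digit_split ((2 ^ n₁ - 1) * 2 ^ z₁) ((2 ^ n₂ - 1) * 2 ^ z₂) (n₂ + z₂) i hy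
    have hdD := digit_split (2 ^ n₂ - 1) (2 ^ n₁ - 1) (z₂ + n₁) i hy2
    rw [hm3, hdm, hD, hdD, digit_block, digit_block, digit_two_pow_sub_one,
      digit_two_pow_sub_one]
    split_ifs <;> omega
  have parityD : (m + D).choose D % 2 = 1 :=
    choose_odd_of_digits (m + D) m D le_rfl hdigm
  have hD0pos : 0 < D0 := by omega
  -- division fact
  have hrdiv : m / D0 = 2 ^ n₁ - 1 + (if D = D0 then 1 else 0) := by
    by_cases hDD : D = D0
    · have hmm : m = D0 * 2 ^ n₁ := by
        calc m = D0 * (2 ^ n₁ - 1) + D0 := by rw [hm2, hDD]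
        _ = D0 * (2 ^ n₁ - 1 + 1) := by ring
        _ = D0 * 2 ^ n₁ := by rw [Nat.sub_add_cancel pa]
      rw [hmm, Nat.mul_div_cancel_left _ hD0pos, if_pos hDD]
      omega
    · have hlt : D < D0 := lt_of_le_of_ne hDD0 hDD
      rw [if_neg hDD, Nat.add_zero, hm2, Nat.mul_comm, Nat.add_comm,
        Nat.add_mul_div_right _ _ hD0pos, Nat.div_eq_of_lt hlt, Nat.zero_add]
  -- rStep evaluations
  have hstep0 : rStep m 0 0 = m / D0 := by
    simp only [rStep, he, hdval, pow_zero, Nat.sub_self, Nat.sub_zero]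
    rw [if_pos parity0]
  have hstepA : ∀ ℓ, ℓ < L → rStep m ℓ (D0 * (2 ^ n₁ - 1)) = 0 := by
    intro ℓ hℓ
    simp only [rStep, he, pow_zero, Nat.sub_self, Nat.sub_zero, hdval]
    split
    · apply Nat.div_eq_of_lt
      omega
    · rfl
  have hstepL : rStep m L (D0 * (2 ^ n₁ - 1)) = 1 := by
    simp only [rStep, hdL, he, pow_zero, Nat.sub_self, Nat.sub_zero, if_pos parityD]
    rw [show m - D0 * (2 ^ n₁ - 1) = D by omega]
    exact Nat.div_self hDpos
  have hstepm : ∀ ℓ, rStep m ℓ m = 0 := by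
    intro ℓ
    simp only [rStep, he, pow_zero, Nat.sub_self, Nat.sub_zero]
    split
    · exact Nat.zero_div _
    · rfl
  -- partial sums
  have hps : ∀ ℓ, partialS m (ℓ + 1) = if ℓ + 1 ≤ L then D0 * (2 ^ n₁ - 1) else m := by
    intro ℓ
    induction ℓ with
    | zero =>
      have h0 : partialS m 1 = D0 * (m / D0) := by
        simp only [partialS, Nat.zero_add, hdval, Nat.sub_zero, hstep0]
      rw [h0, hrdiv]
      by_cases hDD : D = D0
      · have hL0 : L = 0 := by omega
        rw [if_pos hDD, if_neg (show ¬ (0 + 1 ≤ L) by omega), Nat.mul_add, Nat.mul_one]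
        omega
      · rw [if_neg hDD, Nat.add_zero, if_pos (show 0 + 1 ≤ L by omega)]
    | succ ℓ ih =>
      have hunf : partialS m (ℓ + 1 + 1) =
          partialS m (ℓ + 1) + dVal m (ℓ + 1) * rStep m (ℓ + 1) (partialS m (ℓ + 1)) := rfl
      rw [hunf, ih]
      by_cases hcase : ℓ + 1 ≤ L
      · rw [if_pos hcase]
        by_cases heq : ℓ + 1 = L
        · rw [heq, hstepL, Nat.mul_one, hdL, if_neg (by omega)]
          omega
        · rw [hstepA _ (by omega), Nat.mul_zero, Nat.add_zero, if_pos (by omega)]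
      · rw [if_neg hcase, hstepm, Nat.mul_zero, Nat.add_zero, if_neg (by omega)]
  -- rVal values
  have hrval : ∀ ℓ, rVal m ℓ = (if ℓ = 0 then 2 ^ n₁ - 1 else 0) + (if ℓ = L then 1 else 0) := by
    intro ℓ
    match ℓ with
    | 0 =>
      have h0 : rVal m 0 = m / D0 := hstep0
      rw [h0, hrdiv, if_pos rfl]
      by_cases hDD : D = D0
      · rw [if_pos hDD, if_pos (by omega)]
      · rw [if_neg hDD, if_neg (by omega)]
    | ℓ + 1 =>
      have h0 : rVal m (ℓ + 1) = rStep m (ℓ + 1) (partialS m (ℓ + 1)) := rfl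
      rw [h0, hps ℓ, if_neg (by omega : ¬ ℓ + 1 = 0), Nat.zero_add]
      by_cases hcase : ℓ + 1 ≤ L
      · rw [if_pos hcase]
        by_cases heq : ℓ + 1 = L
        · rw [heq, hstepL, if_pos rfl]
        · rw [hstepA _ (by omega), if_neg heq]
      · rw [if_neg hcase, hstepm, if_neg (by omega)]
  constructor
  · rw [rOf, ht]
    have hsum : ∑ ℓ ∈ Finset.range (D0 - 1 + 1), rVal m ℓ = 2 ^ n₁ := by
      rw [Finset.sum_congr rfl (fun ℓ _ => hrval ℓ), Finset.sum_add_distrib,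
        Finset.sum_ite_eq' _ 0 (fun _ => 2 ^ n₁ - 1), Finset.sum_ite_eq' _ L (fun _ => 1),
        if_pos (Finset.mem_range.mpr (by omega)), if_pos (Finset.mem_range.mpr (by omega))]
      omega
    rw [hsum]
  · intro ℓ hℓ
    rw [hd0, Nat.sub_self, ← hL, hrval ℓ]
end

section
/- Let m = 1^{n_1}0^{z_1}1^{n_2}0^{z_2}⋯1^{n_ω}0^{z_ω} with n_1 < n_2 < ⋯ < n_ω and n_u < z_u for all 1 ≤ u ≤ ω. Set k = n_1 + z_1 + ⋯ + n_ω + z_ω (the least integer with 2^k > m) and d_0 = 2^k - m - 1. Then m - (2^{n_1} - 1)·d_0 equals the number with binary expansion 1^{n_2}0^{z_2}⋯1^{n_ω}0^{z_ω}1^{n_1}, and m < 2^{n_1}·d_0; in particular ⌊m/d_0⌋ = 2^{n_1} - 1. -/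
open Finset

lemma cbe_sum_lt (ω : ℕ) (n z : ℕ → ℕ) :
    ∀ a, (∑ u ∈ Finset.Icc a ω, (2 ^ n u - 1) * 2 ^ (z u + tailLen ω n z (u + 1))) + 1
      ≤ 2 ^ tailLen ω n z a := by
  suffices H : ∀ t a, ω + 1 - a = t →
      (∑ u ∈ Finset.Icc a ω, (2 ^ n u - 1) * 2 ^ (z u + tailLen ω n z (u + 1))) + 1
        ≤ 2 ^ tailLen ω n z a by
    intro a; exact H _ a rfl
  intro t
  induction t with
  | zero =>
    intro a ha
    have hemp : Finset.Icc a ω = ∅ := Finset.Icc_eq_empty (by omega)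
    rw [tailLen, hemp]; simp
  | succ t ih =>
    intro a ha
    have hins : Finset.Icc a ω = insert a (Finset.Icc (a + 1) ω) := by
      ext x; simp [Finset.mem_Icc]; omega
    have hnotin : a ∉ Finset.Icc (a + 1) ω := by simp
    have htail : tailLen ω n z a = (n a + z a) + tailLen ω n z (a + 1) := by
      rw [tailLen, tailLen, hins, Finset.sum_insert hnotin]
    have hrec := ih (a + 1) (by omega)
    rw [hins, Finset.sum_insert hnotin, htail]
    have hpos : 2 ^ n a - 1 + 1 = 2 ^ n a :=
      Nat.succ_pred_eq_of_pos (Nat.pow_pos (by norm_num))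
    calc (2 ^ n a - 1) * 2 ^ (z a + tailLen ω n z (a + 1))
          + (∑ u ∈ Finset.Icc (a+1) ω, (2 ^ n u - 1) * 2 ^ (z u + tailLen ω n z (u + 1))) + 1
        ≤ (2 ^ n a - 1) * 2 ^ (z a + tailLen ω n z (a + 1)) + 2 ^ tailLen ω n z (a + 1) := by
          rw [add_assoc]; exact Nat.add_le_add_left hrec _
      _ ≤ (2 ^ n a - 1) * 2 ^ (z a + tailLen ω n z (a + 1)) + 2 ^ (z a + tailLen ω n z (a + 1)) :=
          Nat.add_le_add_left (Nat.pow_le_pow_right (by norm_num) (by omega)) _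
      _ = 2 ^ n a * 2 ^ (z a + tailLen ω n z (a + 1)) := by
          conv_rhs => rw [← hpos]
          ring
      _ = 2 ^ ((n a + z a) + tailLen ω n z (a + 1)) := by
          simp [pow_add, mul_assoc]

/-- With `m = 1^{n_1}0^{z_1}⋯1^{n_ω}0^{z_ω}`, `n_1 < ⋯ < n_ω`,
`n_u < z_u`, `k = n_1 + z_1 + ⋯ + n_ω + z_ω` and `d_0 = 2^k - m - 1`:
`m - (2^{n_1} - 1)·d_0` is the number with binary expansion
`1^{n_2}0^{z_2}⋯1^{n_ω}0^{z_ω}1^{n_1}`, and `m < 2^{n_1}·d_0`; in particular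
`⌊m/d_0⌋ = 2^{n_1} - 1`. -/
theorem sub_mul_d0_eq (ω : ℕ) (hω : 1 ≤ ω) (n z : ℕ → ℕ)
    (hn : ∀ u ∈ Finset.Icc 1 ω, 1 ≤ n u) (hz : ∀ u ∈ Finset.Icc 1 ω, 1 ≤ z u)
    (hmono : ∀ u, 1 ≤ u → u < ω → n u < n (u + 1))
    (hspace : ∀ u ∈ Finset.Icc 1 ω, n u < z u)
    (m k d0 : ℕ) (hm : m = cbeNum ω n z) (hk : k = tailLen ω n z 1)
    (hd0 : d0 = 2 ^ k - m - 1) :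
    m - (2 ^ n 1 - 1) * d0 =
      (∑ u ∈ Finset.Icc 2 ω, (2 ^ n u - 1) * 2 ^ (z u + tailLen ω n z (u + 1))) * 2 ^ n 1 +
        (2 ^ n 1 - 1) ∧
    m < 2 ^ n 1 * d0 ∧
    m / d0 = 2 ^ n 1 - 1 := by
  have hmem1 : (1:ℕ) ∈ Finset.Icc 1 ω := Finset.mem_Icc.mpr ⟨le_refl 1, hω⟩
  have hn1 : 1 ≤ n 1 := hn 1 hmem1
  have hz1 : n 1 < z 1 := hspace 1 hmem1
  set S := ∑ u ∈ Finset.Icc 2 ω, (2 ^ n u - 1) * 2 ^ (z u + tailLen ω n z (u + 1)) with hSdef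
  set N := 2 ^ n 1 with hNdef
  set Z := 2 ^ z 1 with hZdef
  set R := 2 ^ tailLen ω n z 2 with hRdef
  have hins : Finset.Icc 1 ω = insert 1 (Finset.Icc 2 ω) := by
    ext x; simp [Finset.mem_Icc]; omega
  have hnotin : (1:ℕ) ∉ Finset.Icc 2 ω := by simp
  -- basic facts
  have hN1 : 1 ≤ N := Nat.one_le_two_pow
  have hN2 : 2 ≤ N := by
    rw [hNdef]; calc (2:ℕ) = 2 ^ 1 := rfl
    _ ≤ 2 ^ n 1 := Nat.pow_le_pow_right (by norm_num) hn1
  have hR1 : 1 ≤ R := Nat.one_le_two_pow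
  have hZ1 : 1 ≤ Z := Nat.one_le_two_pow
  have hNZ : 2 * N ≤ Z := by
    rw [hNdef, hZdef]
    calc 2 * 2 ^ n 1 = 2 ^ (n 1 + 1) := by rw [pow_succ]; ring
    _ ≤ 2 ^ z 1 := Nat.pow_le_pow_right (by norm_num) (by omega)
  have hS : S + 1 ≤ R := cbe_sum_lt ω n z 2
  have hm' : m = (N - 1) * (Z * R) + S := by
    rw [hm, cbeNum, hins, Finset.sum_insert hnotin]
    have h11 : (1:ℕ) + 1 = 2 := rfl
    rw [h11, pow_add]
  have h2k : 2 ^ k = N * (Z * R) := by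
    have htail : tailLen ω n z 1 = (n 1 + z 1) + tailLen ω n z 2 := by
      rw [tailLen, tailLen, hins, Finset.sum_insert hnotin]
    rw [hk, htail, pow_add, pow_add, mul_assoc]
  -- m + 1 ≤ 2 ^ k
  have hS' : S + 1 ≤ Z * R := hS.trans (Nat.le_mul_of_pos_left _ (by omega))
  have hmk : m + 1 ≤ 2 ^ k := by
    rw [h2k, hm', add_assoc]
    calc (N - 1) * (Z * R) + (S + 1) ≤ (N - 1) * (Z * R) + Z * R := Nat.add_le_add_left hS' _
      _ = (N - 1 + 1) * (Z * R) := by ring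
      _ = N * (Z * R) := by rw [Nat.sub_add_cancel hN1]
  have hd0' : d0 = N * (Z * R) - m - 1 := by rw [hd0, h2k]
  have hmk' : m + 1 ≤ N * (Z * R) := by rw [← h2k]; exact hmk
  -- integer versions
  have hd0z : (d0 : ℤ) = (N : ℤ) * ((Z : ℤ) * R) - m - 1 := by
    rw [hd0', Nat.sub_sub, Nat.cast_sub hmk']
    push_cast
    ring
  have hmz : (m : ℤ) = ((N : ℤ) - 1) * ((Z : ℤ) * R) + S := by
    rw [hm', Nat.cast_add, Nat.cast_mul, Nat.cast_sub hN1]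
    push_cast
    ring
  clear_value S N Z R
  -- key natural equation
  have hkey : m = (S * N + (N - 1)) + (N - 1) * d0 := by
    zify [hN1]
    rw [hmz, hd0z, hmz]
    ring
  clear hm hk hd0 hm' hd0' h2k hmk hmk' hS' hins hnotin hn hz hmono hspace hmem1 hSdef hNdef hZdef hRdef
  have key2 : (N : ℤ) * d0 - m = (Z : ℤ) * R - ((N : ℤ) + 1) * S - N := by
    rw [hd0z, hmz]; ring
  have hlt : m < N * d0 := by
    zify
    have hSz : (S : ℤ) + 1 ≤ R := by exact_mod_cast hS
    have hNZz : 2 * (N : ℤ) ≤ Z := by exact_mod_cast hNZ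
    have hN2z : (2 : ℤ) ≤ N := by exact_mod_cast hN2
    have hR1z : (1 : ℤ) ≤ R := by exact_mod_cast hR1
    nlinarith [key2, mul_nonneg (show (0:ℤ) ≤ (N:ℤ) + 1 by linarith) (show (0:ℤ) ≤ (R:ℤ) - S - 1 by linarith),
      mul_nonneg (show (0:ℤ) ≤ (Z:ℤ) - 2*N by linarith) (show (0:ℤ) ≤ (R:ℤ) by linarith),
      mul_nonneg (show (0:ℤ) ≤ (N:ℤ) - 1 by linarith) (show (0:ℤ) ≤ (R:ℤ) - 1 by linarith)]
  refine ⟨Nat.sub_eq_of_eq_add hkey, hlt, ?_⟩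
  apply Nat.div_eq_of_lt_le
  · rw [hkey]; exact Nat.le_add_left _ _
  · have hsucc : (N - 1) + 1 = N := by omega
    rw [hsucc]
    exact hlt
end
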